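/- arXiv:1212.5309 — 10 statements merged into one kernel-verified Lean document; each statement's English description precedes it below -/
import Mathlib

section
/- Let ξ_1, …, ξ_n be independent random variables with E[ξ_k] = 0 and E|ξ_k|^p < ∞ for some p with 1 ≤ p ≤ 2, for each k = 1, …, n, and let ζ_n = ξ_1 + ⋯ + ξ_n. Then E|ζ_n|^p ≤ (2 − 1/n) · Σ_{k=1}^n E|ξ_k|^p. -/
open MeasureTheory ProbabilityTheory Finset

/-!
For `1 ≤ p ≤ 2` and real `x, y`,
`|x + y| ^ p ≤ |x| ^ p + p · φ(x) · y + 2 |y| ^ p` with `φ(x) = sign x · |x| ^ (p - 1)`, the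
derivative of `|·| ^ p` divided by `p`. For `p > 1` this is a first-order Taylor bound: `φ` is
`(p - 1)`-Hölder with constant `2`. Put `x` = a partial sum and `y` = a new, independent, centred
summand: the middle term has expectation `E φ(x) · E y = 0`. Adding the summands one at a time
to `ξ k` gives `E|ζ n|^p ≤ E|ξ k|^p + 2 ∑_{j ≠ k} E|ξ j|^p`, and choosing `k` with the largest
moment turns the right-hand side into `(2 - 1/n) ∑ E|ξ j|^p`.
-/

/-- `sign x * |x| ^ q`. -/
noncomputable def signedRpow (x q : ℝ) : ℝ := |x| ^ (q - 1) * x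

lemma signedRpow_neg (x q : ℝ) : signedRpow (-x) q = -signedRpow x q := by
  simp [signedRpow]

lemma signedRpow_of_nonneg {x q : ℝ} (hq : 0 < q) (hx : 0 ≤ x) : signedRpow x q = x ^ q := by
  rcases hx.eq_or_lt with rfl | hx
  · simp [signedRpow, Real.zero_rpow hq.ne']
  · rw [signedRpow, abs_of_pos hx, Real.rpow_sub_one hx.ne', div_mul_cancel₀ _ hx.ne']

lemma abs_signedRpow_le (x q : ℝ) : |signedRpow x q| ≤ |x| ^ q := by
  rcases eq_or_ne x 0 with rfl | hx
  · simpa [signedRpow] using Real.rpow_nonneg le_rfl q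
  · rw [signedRpow, abs_mul, abs_of_nonneg (by positivity), Real.rpow_sub_one (abs_ne_zero.2 hx),
      div_mul_cancel₀ _ (abs_ne_zero.2 hx)]

lemma rpow_sub_rpow_le_rpow_sub {a b q : ℝ} (hb : 0 ≤ b) (hba : b ≤ a) (hq0 : 0 ≤ q)
    (hq1 : q ≤ 1) : a ^ q - b ^ q ≤ (a - b) ^ q := by
  have := Real.rpow_add_le_add_rpow (sub_nonneg.2 hba) hb hq0 hq1
  rw [sub_add_cancel] at this
  linarith

lemma abs_signedRpow_sub_le {q : ℝ} (hq0 : 0 < q) (hq1 : q ≤ 1) (a b : ℝ) :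
    |signedRpow a q - signedRpow b q| ≤ 2 * |a - b| ^ q := by
  wlog hba : b ≤ a generalizing a b
  · rw [abs_sub_comm, abs_sub_comm a]
    exact this b a (le_of_not_ge hba)
  have same_sign : ∀ a b : ℝ, 0 ≤ b → b ≤ a →
      |signedRpow a q - signedRpow b q| ≤ 2 * |a - b| ^ q := by
    intro a b hb hba
    rw [signedRpow_of_nonneg hq0 (hb.trans hba), signedRpow_of_nonneg hq0 hb,
      abs_of_nonneg (sub_nonneg.2 (Real.rpow_le_rpow hb hba hq0.le)),
      abs_of_nonneg (sub_nonneg.2 hba)]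
    linarith [rpow_sub_rpow_le_rpow_sub hb hba hq0.le hq1, Real.rpow_nonneg (sub_nonneg.2 hba) q]
  rcases le_total 0 b with hb | hb
  · exact same_sign a b hb hba
  rcases le_total 0 a with ha | ha
  · have hgb : signedRpow b q = -(-b) ^ q := by
      rw [← neg_neg b, signedRpow_neg, signedRpow_of_nonneg hq0 (neg_nonneg.2 hb), neg_neg]
    rw [signedRpow_of_nonneg hq0 ha, hgb, sub_neg_eq_add, abs_of_nonneg (sub_nonneg.2 hba),
      abs_of_nonneg (add_nonneg (Real.rpow_nonneg ha q) (Real.rpow_nonneg (neg_nonneg.2 hb) q))]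
    linarith [Real.rpow_le_rpow ha (by linarith : a ≤ a - b) hq0.le,
      Real.rpow_le_rpow (neg_nonneg.2 hb) (by linarith : -b ≤ a - b) hq0.le]
  · have := same_sign (-b) (-a) (neg_nonneg.2 ha) (neg_le_neg hba)
    rwa [signedRpow_neg, signedRpow_neg, neg_sub_neg, neg_sub_neg] at this

lemma hasDerivAt_abs_rpow_signedRpow {p : ℝ} (hp : 1 < p) (x : ℝ) :
    HasDerivAt (fun x : ℝ => |x| ^ p) (p * signedRpow x (p - 1)) x := by
  convert hasDerivAt_abs_rpow x hp using 1
  rw [signedRpow, sub_sub, one_add_one_eq_two, mul_assoc]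

lemma abs_add_rpow_le_of_one_lt {p : ℝ} (hp1 : 1 < p) (hp2 : p ≤ 2) (x y : ℝ) :
    |x + y| ^ p ≤ |x| ^ p + p * signedRpow x (p - 1) * y + 2 * |y| ^ p := by
  set g : ℝ → ℝ := fun s =>
    |x + s * y| ^ p - p * signedRpow x (p - 1) * y * s - 2 * |y| ^ p * s ^ p
  set g' : ℝ → ℝ := fun s => p * signedRpow (x + s * y) (p - 1) * y - p * signedRpow x (p - 1) * y
    - 2 * |y| ^ p * (p * s ^ (p - 1))
  have hg' : ∀ s, HasDerivAt g (g' s) s := by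
    intro s
    have hline : HasDerivAt (fun s => x + s * y) y s := by
      simpa using ((hasDerivAt_id s).mul_const y).const_add x
    exact ((((hasDerivAt_abs_rpow_signedRpow hp1 _).comp s hline).sub
      ((hasDerivAt_id s).const_mul (p * signedRpow x (p - 1) * y))).sub
      ((Real.hasDerivAt_rpow_const (Or.inr hp1.le)).const_mul (2 * |y| ^ p))).congr_deriv
      (by simp only [g', mul_one])
  have hg'_nonpos : ∀ s ∈ interior (Set.Icc (0 : ℝ) 1), g' s ≤ 0 := by
    intro s hs
    obtain ⟨hs0, -⟩ : s ∈ Set.Ioo (0 : ℝ) 1 := by rwa [interior_Icc] at hs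
    have hq0 : 0 < p - 1 := by linarith
    have holder := abs_signedRpow_sub_le hq0 (by linarith) (x + s * y) x
    have hy : |s * y| ^ (p - 1) * |y| = s ^ (p - 1) * |y| ^ p := by
      rw [abs_mul, abs_of_pos hs0, Real.mul_rpow hs0.le (abs_nonneg y), mul_assoc,
        ← Real.rpow_add_one' (abs_nonneg y) (by linarith), sub_add_cancel]
    have : (signedRpow (x + s * y) (p - 1) - signedRpow x (p - 1)) * y
        ≤ 2 * s ^ (p - 1) * |y| ^ p :=
      calc _ ≤ |signedRpow (x + s * y) (p - 1) - signedRpow x (p - 1)| * |y| := by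
            rw [← abs_mul]; exact le_abs_self _
        _ ≤ 2 * |s * y| ^ (p - 1) * |y| := by
            rw [add_sub_cancel_left] at holder
            exact mul_le_mul_of_nonneg_right holder (abs_nonneg y)
        _ = 2 * s ^ (p - 1) * |y| ^ p := by rw [mul_assoc, hy, mul_assoc]
    simp only [g']
    nlinarith
  have hanti : AntitoneOn g (Set.Icc 0 1) :=
    antitoneOn_of_hasDerivWithinAt_nonpos (convex_Icc 0 1) (by fun_prop (disch := positivity))
      (fun s _ => (hg' s).hasDerivWithinAt) hg'_nonpos
  have := hanti (Set.left_mem_Icc.2 zero_le_one) (Set.right_mem_Icc.2 zero_le_one) zero_le_one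
  simp only [g, zero_mul, add_zero, mul_zero, one_mul, mul_one, Real.one_rpow,
    Real.zero_rpow (by linarith : p ≠ 0), sub_zero] at this
  linarith

lemma abs_add_rpow_le {p : ℝ} (hp1 : 1 ≤ p) (hp2 : p ≤ 2) (x y : ℝ) :
    |x + y| ^ p ≤ |x| ^ p + p * signedRpow x (p - 1) * y + 2 * |y| ^ p := by
  rcases hp1.eq_or_lt with rfl | hp1
  · have hsign : |signedRpow x (1 - 1) * y| ≤ |y| := by
      have := abs_signedRpow_le x (1 - 1)
      rw [sub_self, Real.rpow_zero] at this
      rw [abs_mul, sub_self]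
      exact mul_le_of_le_one_left (abs_nonneg y) this
    simp only [Real.rpow_one, one_mul]
    linarith [abs_add_le x y, neg_abs_le (signedRpow x (1 - 1) * y), abs_nonneg y]
  · exact abs_add_rpow_le_of_one_lt hp1 hp2 x y

lemma integral_abs_add_rpow_le {Ω : Type*} [MeasurableSpace Ω] {μ : Measure Ω}
    [IsFiniteMeasure μ] {p : ℝ} (hp1 : 1 ≤ p) (hp2 : p ≤ 2) {X Y : Ω → ℝ}
    (hXY : IndepFun X Y μ) (hX : AEMeasurable X μ) (hY : Integrable Y μ) (hY0 : μ[Y] = 0)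
    (hXp : Integrable (fun ω => |X ω| ^ p) μ) (hYp : Integrable (fun ω => |Y ω| ^ p) μ) :
    ∫ ω, |X ω + Y ω| ^ p ∂μ ≤ ∫ ω, |X ω| ^ p ∂μ + 2 * ∫ ω, |Y ω| ^ p ∂μ := by
  set φ : ℝ → ℝ := fun x => p * signedRpow x (p - 1)
  have hφ : Measurable φ := by unfold φ signedRpow; fun_prop
  have hφX : Integrable (φ ∘ X) μ := by
    have hXq : Integrable (fun ω => |X ω| ^ (p - 1)) μ := by
      simpa using integrable_norm_rpow_of_le (p := p - 1) (q := p) hX.aestronglyMeasurable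
        (by linarith) (by linarith) (by linarith) (by simpa using hXp)
    refine (hXq.const_mul p).mono' (hφ.comp_aemeasurable hX).aestronglyMeasurable
      (ae_of_all _ fun ω => ?_)
    simp only [φ, Function.comp_apply, Real.norm_eq_abs, abs_mul,
      abs_of_nonneg (by linarith : (0 : ℝ) ≤ p)]
    exact mul_le_mul_of_nonneg_left (abs_signedRpow_le _ _) (by linarith)
  have hindep : IndepFun (φ ∘ X) Y μ := hXY.comp hφ measurable_id
  have hcross : Integrable (φ ∘ X * Y) μ := hindep.integrable_mul hφX hY
  have hcross0 : μ[φ ∘ X * Y] = 0 := by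
    rw [hindep.integral_mul_eq_mul_integral hφX.aestronglyMeasurable hY.aestronglyMeasurable,
      hY0, mul_zero]
  have hfirst : Integrable (fun ω => |X ω| ^ p + (φ ∘ X * Y) ω) μ := hXp.add hcross
  calc ∫ ω, |X ω + Y ω| ^ p ∂μ
      ≤ ∫ ω, (|X ω| ^ p + (φ ∘ X * Y) ω + 2 * |Y ω| ^ p) ∂μ :=
        integral_mono_of_nonneg (ae_of_all _ fun ω => by positivity)
          (hfirst.add (hYp.const_mul 2)) (ae_of_all _ fun ω => abs_add_rpow_le hp1 hp2 (X ω) (Y ω))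
    _ = ∫ ω, |X ω| ^ p ∂μ + 2 * ∫ ω, |Y ω| ^ p ∂μ := by
        rw [integral_add hfirst (hYp.const_mul 2), integral_add hXp hcross, hcross0,
          integral_const_mul, add_zero]

lemma integrable_abs_rpow_iff_memLp {Ω : Type*} [MeasurableSpace Ω] {μ : Measure Ω} {p : ℝ}
    (hp : 0 < p) {f : Ω → ℝ} (hf : AEStronglyMeasurable f μ) :
    Integrable (fun ω => |f ω| ^ p) μ ↔ MemLp f (ENNReal.ofReal p) μ := by
  simpa [ENNReal.toReal_ofReal hp.le] using
    integrable_norm_rpow_iff hf (ENNReal.ofReal_pos.2 hp).ne' ENNReal.ofReal_ne_top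

lemma integral_abs_add_sum_rpow_le {Ω ι : Type*} [MeasurableSpace Ω] {μ : Measure Ω}
    [DecidableEq ι] {p : ℝ} (hp1 : 1 ≤ p) (hp2 : p ≤ 2) {ξ : ι → Ω → ℝ}
    (hindep : iIndepFun ξ μ) (hmeas : ∀ i, AEMeasurable (ξ i) μ)
    (hint : ∀ i, Integrable (ξ i) μ) (hmean : ∀ i, μ[ξ i] = 0)
    (hmom : ∀ i, Integrable (fun ω => |ξ i ω| ^ p) μ) {k : ι} {s : Finset ι} (hk : k ∉ s) :
    ∫ ω, |ξ k ω + ∑ j ∈ s, ξ j ω| ^ p ∂μ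
      ≤ ∫ ω, |ξ k ω| ^ p ∂μ + 2 * ∑ j ∈ s, ∫ ω, |ξ j ω| ^ p ∂μ := by
  have := hindep.isProbabilityMeasure
  have hLp : ∀ i, MemLp (ξ i) (ENNReal.ofReal p) μ := fun i =>
    (integrable_abs_rpow_iff_memLp (by linarith) (hmeas i).aestronglyMeasurable).1 (hmom i)
  induction s using Finset.induction_on with
  | empty => simp
  | insert i s hi ih =>
    have hks : k ∉ s := fun h => hk (mem_insert_of_mem h)
    have hik : i ∉ insert k s := by
      rw [mem_insert, not_or]
      exact ⟨fun h => hk (h ▸ mem_insert_self i s), hi⟩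
    set X : Ω → ℝ := fun ω => ξ k ω + ∑ j ∈ s, ξ j ω
    have hXLp : MemLp X (ENNReal.ofReal p) μ := (hLp k).add (memLp_finsetSum s fun j _ => hLp j)
    have hXi : IndepFun X (ξ i) μ := by
      convert hindep.indepFun_finsetSum_of_notMem₀ hmeas hik using 1
      ext ω
      simp [X, sum_insert hks]
    calc ∫ ω, |ξ k ω + ∑ j ∈ insert i s, ξ j ω| ^ p ∂μ = ∫ ω, |X ω + ξ i ω| ^ p ∂μ := by
          simp only [X, sum_insert hi, add_assoc, add_comm (ξ i _)]
      _ ≤ ∫ ω, |X ω| ^ p ∂μ + 2 * ∫ ω, |ξ i ω| ^ p ∂μ :=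
          integral_abs_add_rpow_le hp1 hp2 hXi hXLp.aestronglyMeasurable.aemeasurable (hint i)
            (hmean i) ((integrable_abs_rpow_iff_memLp (by linarith)
              hXLp.aestronglyMeasurable).2 hXLp) (hmom i)
      _ ≤ ∫ ω, |ξ k ω| ^ p ∂μ + 2 * ∑ j ∈ insert i s, ∫ ω, |ξ j ω| ^ p ∂μ := by
          rw [sum_insert hi]
          linarith [ih hks]

lemma exists_add_two_mul_sum_erase_le {ι : Type*} [Fintype ι] [DecidableEq ι] [Nonempty ι]
    (c : ι → ℝ) :
    ∃ k, c k + 2 * ∑ j ∈ univ.erase k, c j ≤ (2 - 1 / Fintype.card ι) * ∑ j, c j := by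
  obtain ⟨k, -, hk⟩ := exists_max_image univ c univ_nonempty
  refine ⟨k, ?_⟩
  have hcard : (0 : ℝ) < Fintype.card ι := by exact_mod_cast Fintype.card_pos
  have hmean_le : (∑ j, c j) / Fintype.card ι ≤ c k := by
    rw [div_le_iff₀ hcard]
    simpa [mul_comm] using sum_le_card_nsmul univ c (c k) fun j _ => hk j (mem_univ j)
  have herase := add_sum_erase univ c (mem_univ k)
  rw [sub_mul, one_div_mul_eq_div]
  linarith

theorem mean_pow_abs_sum_le_general
    {Ω : Type*} [MeasurableSpace Ω] (μ : Measure Ω)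
    (n : ℕ) (hn : 0 < n) (ξ : Fin n → Ω → ℝ) (p : ℝ) (hp1 : 1 ≤ p) (hp2 : p ≤ 2)
    (hmeas : ∀ k, Measurable (ξ k))
    (hindep : iIndepFun ξ μ)
    (hint : ∀ k, Integrable (ξ k) μ)
    (hmean : ∀ k, ∫ ω, ξ k ω ∂μ = 0)
    (hmom : ∀ k, Integrable (fun ω => |ξ k ω| ^ p) μ) :
    ∫ ω, |∑ j, ξ j ω| ^ p ∂μ
      ≤ (2 - 1 / (n : ℝ)) * ∑ k, ∫ ω, |ξ k ω| ^ p ∂μ := by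
  have : Nonempty (Fin n) := Fin.pos_iff_nonempty.1 hn
  obtain ⟨k, hk⟩ := exists_add_two_mul_sum_erase_le fun k => ∫ ω, |ξ k ω| ^ p ∂μ
  rw [Fintype.card_fin] at hk
  refine le_trans ?_ hk
  have hsplit : ∀ ω, ξ k ω + ∑ j ∈ univ.erase k, ξ j ω = ∑ j, ξ j ω := fun ω =>
    add_sum_erase univ (fun j => ξ j ω) (mem_univ k)
  simpa only [hsplit] using
    integral_abs_add_sum_rpow_le hp1 hp2 hindep (fun j => (hmeas j).aemeasurable) hint hmean hmom
      (notMem_erase k univ)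

/-- **von Bahr–Esseen inequality.** If `ξ 1, …, ξ n` are independent random
variables with zero means and finite `p`-th absolute moments for some
`1 ≤ p ≤ 2`, and `ζ n = ξ 1 + ⋯ + ξ n`, then
`E|ζ n|^p ≤ (2 - 1/n) ∑_{k=1}^n E|ξ k|^p`. -/
theorem mean_pow_abs_sum_le
    {Ω : Type*} [MeasurableSpace Ω] (μ : Measure Ω) [IsProbabilityMeasure μ]
    (n : ℕ) (hn : 0 < n) (ξ : Fin n → Ω → ℝ) (p : ℝ) (hp1 : 1 ≤ p) (hp2 : p ≤ 2)
    (hmeas : ∀ k, Measurable (ξ k))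
    (hindep : iIndepFun ξ μ)
    (hint : ∀ k, Integrable (ξ k) μ)
    (hmean : ∀ k, ∫ ω, ξ k ω ∂μ = 0)
    (hmom : ∀ k, Integrable (fun ω => |ξ k ω| ^ p) μ) :
    ∫ ω, |∑ j, ξ j ω| ^ p ∂μ
      ≤ (2 - 1 / (n : ℝ)) * ∑ k, ∫ ω, |ξ k ω| ^ p ∂μ :=
  mean_pow_abs_sum_le_general μ n hn ξ p hp1 hp2 hmeas hindep hint hmean hmom
end

section
/- Let ξ_1, …, ξ_n be independent and identically distributed random variables with E[ξ_1] < ∞ and Var[ξ_1] < ∞. Then E[max_{1 ≤ k ≤ n} ξ_k] ≤ E[ξ_1] + ((n−1)/√(2n−1)) · √(Var[ξ_1]). -/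
/-!
Let `Q` be the quantile function of the common law `ν` of the `ξ k`. Under the uniform measure on
`(0, 1)`, `Q` has law `ν`, and the maximum of `n` i.i.d. copies has the law of `Q` under the
density `w p = n p ^ (n - 1)` of the maximum of `n` independent uniforms, so
`E[max] = ∫₀¹ Q w`. As `∫₀¹ w = 1`, the gap `E[max] - E[ξ 1]` is the covariance of `Q` and `w`
on `(0, 1)`, which Cauchy–Schwarz bounds by `√Var[ξ 1] · √Var[w]`, and
`Var[w] = (n - 1)² / (2n - 1)`.
-/

open MeasureTheory ProbabilityTheory Set Filter
open scoped Topology ENNReal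

instance : IsProbabilityMeasure (volume.restrict (Ioo (0:ℝ) 1)) := ⟨by simp⟩

section Covariance

variable {Ω : Type*} [MeasurableSpace Ω] {μ : Measure Ω} {X Y : Ω → ℝ}

lemma covariance_le_sqrt_variance_mul_sqrt_variance [IsFiniteMeasure μ] (hX : MemLp X 2 μ)
    (hY : MemLp Y 2 μ) : cov[X, Y; μ] ≤ √Var[X; μ] * √Var[Y; μ] := by
  have hquad : ∀ t : ℝ, 0 ≤ Var[Y; μ] * (t * t) + 2 * cov[X, Y; μ] * t + Var[X; μ] := fun t ↦ by
    have h := variance_add hX (hY.const_smul t)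
    rw [covariance_smul_right, variance_smul] at h
    nlinarith [variance_nonneg (X + t • Y) μ]
  have hd := discrim_le_zero hquad
  rw [discrim] at hd
  rw [← Real.sqrt_mul (variance_nonneg _ _)]
  exact Real.le_sqrt_of_sq_le (by nlinarith)

end Covariance

/-- Only `p ∈ (0, 1)` is meaningful: for `p ≤ 0` the set is `univ`, for `1 < p` it is empty, and
`sInf` returns the junk value `0` on both. -/
noncomputable def quantile (ν : Measure ℝ) (p : ℝ) : ℝ := sInf {x | p ≤ cdf ν x}

section Quantile

variable {ν : Measure ℝ}

lemma quantile_le_iff {p : ℝ} (hp : p ∈ Ioo 0 1) {x : ℝ} : quantile ν p ≤ x ↔ p ≤ cdf ν x := by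
  set S := {x | p ≤ cdf ν x}
  have hne : S.Nonempty :=
    (((tendsto_cdf_atTop ν).eventually (lt_mem_nhds hp.2)).exists).imp fun _ h ↦ h.le
  have hbdd : BddBelow S := by
    obtain ⟨x₀, hx₀⟩ := ((tendsto_cdf_atBot ν).eventually (gt_mem_nhds hp.1)).exists
    exact ⟨x₀, fun y hy ↦ le_of_not_gt fun hlt ↦ (hx₀.trans_le hy).not_ge (monotone_cdf ν hlt.le)⟩
  have hmem : p ≤ cdf ν (quantile ν p) := by
    have hright : Tendsto (cdf ν) (𝓝[>] (quantile ν p)) (𝓝 (cdf ν (quantile ν p))) :=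
      ((cdf ν).right_continuous _).mono_left (nhdsWithin_mono _ Ioi_subset_Ici_self)
    refine ge_of_tendsto hright (eventually_mem_nhdsWithin.mono fun y hy ↦ ?_)
    obtain ⟨s, hs, hsy⟩ := (csInf_lt_iff hbdd hne).1 hy
    exact hs.trans (monotone_cdf ν hsy.le)
  exact ⟨fun h ↦ hmem.trans (monotone_cdf ν h), fun h ↦ csInf_le hbdd h⟩

lemma monotoneOn_quantile : MonotoneOn (quantile ν) (Ioo 0 1) := fun _ hp _ hq hpq ↦
  (quantile_le_iff hp).2 (hpq.trans ((quantile_le_iff hq).1 le_rfl))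

lemma aemeasurable_quantile : AEMeasurable (quantile ν) (volume.restrict (Ioo 0 1)) :=
  aemeasurable_restrict_of_monotoneOn measurableSet_Ioo monotoneOn_quantile

lemma quantile_preimage_Iic_inter_Ioo (x : ℝ) :
    quantile ν ⁻¹' Iic x ∩ Ioo 0 1 = Iic (cdf ν x) ∩ Ioo 0 1 := by
  ext p
  exact and_congr_left fun hp ↦ quantile_le_iff hp

lemma map_quantile_withDensity_Iic (g : ℝ → ℝ≥0∞) (x : ℝ) :
    (((volume.restrict (Ioo 0 1)).withDensity g).map (quantile ν)) (Iic x)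
      = ∫⁻ p in Ioc 0 (cdf ν x), g p := by
  have hQ : AEMeasurable (quantile ν) ((volume.restrict (Ioo 0 1)).withDensity g) :=
    aemeasurable_quantile.mono_ac (withDensity_absolutelyContinuous _ _)
  have hae : (Iic (cdf ν x) ∩ Ioo 0 1 : Set ℝ) =ᵐ[volume] Ioc 0 (cdf ν x) := by
    have := (ae_eq_refl (Iic (cdf ν x))).inter
      (Ioo_ae_eq_Ioc (μ := volume) (a := (0 : ℝ)) (b := 1))
    rwa [inter_comm _ (Ioc _ _), Ioc_inter_Iic, min_eq_right (cdf_le_one ν x)] at this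
  rw [Measure.map_apply_of_aemeasurable hQ measurableSet_Iic, withDensity_apply',
    Measure.restrict_restrict' measurableSet_Ioo, quantile_preimage_Iic_inter_Ioo,
    Measure.restrict_congr_set hae]

lemma map_quantile_uniform [IsProbabilityMeasure ν] :
    (volume.restrict (Ioo 0 1)).map (quantile ν) = ν := by
  have : IsProbabilityMeasure ((volume.restrict (Ioo (0:ℝ) 1)).map (quantile ν)) :=
    Measure.isProbabilityMeasure_map aemeasurable_quantile
  refine Measure.ext_of_Iic _ _ fun x ↦ ?_
  have h := map_quantile_withDensity_Iic (ν := ν) 1 x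
  rw [withDensity_one] at h
  rw [h, Pi.one_def, setLIntegral_one, Real.volume_Ioc, sub_zero, ofReal_cdf]

lemma identDistrib_quantile_map {Ω : Type*} [MeasurableSpace Ω] {μ : Measure Ω}
    [IsProbabilityMeasure μ] {X : Ω → ℝ} (hX : Measurable X) :
    IdentDistrib (quantile (μ.map X)) X (volume.restrict (Ioo 0 1)) μ where
  aemeasurable_fst := aemeasurable_quantile
  aemeasurable_snd := hX.aemeasurable
  map_eq := by
    have := Measure.isProbabilityMeasure_map (μ := μ) hX.aemeasurable
    exact map_quantile_uniform

end Quantile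

section PowerDensity

variable {n : ℕ}

lemma integral_Ioc_natCast_mul_pow (hn : n ≠ 0) (c : ℝ) (hc : 0 ≤ c) :
    ∫ p in Ioc 0 c, (n : ℝ) * p ^ (n - 1) = c ^ n := by
  rw [← intervalIntegral.integral_of_le hc, intervalIntegral.integral_eq_sub_of_hasDerivAt
    (fun x _ ↦ hasDerivAt_pow n x) ((by fun_prop : Continuous _).intervalIntegrable _ _),
    zero_pow hn, sub_zero]

lemma setLIntegral_Ioc_natCast_mul_pow (hn : n ≠ 0) {c : ℝ} (hc : 0 ≤ c) :
    ∫⁻ p in Ioc 0 c, ENNReal.ofReal (n * p ^ (n - 1)) = ENNReal.ofReal (c ^ n) := by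
  rw [← ofReal_integral_eq_lintegral_ofReal (by fun_prop : Continuous _).integrableOn_Ioc,
    integral_Ioc_natCast_mul_pow hn c hc]
  filter_upwards [ae_restrict_mem measurableSet_Ioc] with p hp
  have := hp.1.le
  positivity

lemma integral_Ioo_natCast_mul_pow (hn : n ≠ 0) :
    ∫ p in Ioo 0 1, (n : ℝ) * p ^ (n - 1) = 1 := by
  rw [← integral_Ioc_eq_integral_Ioo, integral_Ioc_natCast_mul_pow hn 1 zero_le_one, one_pow]

lemma memLp_natCast_mul_pow_Ioo (n : ℕ) :
    MemLp (fun p : ℝ ↦ (n : ℝ) * p ^ (n - 1)) 2 (volume.restrict (Ioo 0 1)) := by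
  refine MemLp.of_bound (by fun_prop) n ?_
  filter_upwards [ae_restrict_mem measurableSet_Ioo] with p hp
  rw [norm_mul, Real.norm_natCast, norm_pow, Real.norm_of_nonneg hp.1.le]
  exact mul_le_of_le_one_right n.cast_nonneg (pow_le_one₀ hp.1.le hp.2.le)

lemma variance_natCast_mul_pow_Ioo (hn : 0 < n) :
    Var[fun p : ℝ ↦ (n : ℝ) * p ^ (n - 1); volume.restrict (Ioo 0 1)]
      = ((n : ℝ) - 1) ^ 2 / (2 * n - 1) := by
  have hsq : ∫ p in Ioo 0 1, ((n : ℝ) * p ^ (n - 1)) ^ 2 = (n : ℝ) ^ 2 / (2 * n - 1) := by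
    have hexp : ((2 * (n - 1) : ℕ) : ℝ) + 1 = 2 * n - 1 := by
      push_cast [Nat.cast_sub hn]
      ring
    simp_rw [mul_pow, ← pow_mul]
    rw [← integral_Ioc_eq_integral_Ioo, ← intervalIntegral.integral_of_le zero_le_one,
      intervalIntegral.integral_const_mul, integral_pow, mul_comm (n - 1) 2, hexp]
    simp [div_eq_mul_inv]
  have h2n : (2 * n - 1 : ℝ) ≠ 0 := by
    have : (1 : ℝ) ≤ n := by exact_mod_cast hn
    linarith
  rw [variance_eq_sub (memLp_natCast_mul_pow_Ioo n)]
  simp only [Pi.pow_apply]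
  rw [hsq, integral_Ioo_natCast_mul_pow hn.ne', one_pow, eq_div_iff h2n, sub_mul,
    div_mul_cancel₀ _ h2n]
  ring

end PowerDensity

section Maximum

variable {Ω ι : Type*} [MeasurableSpace Ω] {μ : Measure Ω} [Fintype ι] [Nonempty ι]
  {X : ι → Ω → ℝ} {ν : Measure ℝ} [IsProbabilityMeasure ν]

lemma ProbabilityTheory.iIndepFun.map_sup'_Iic (hX : ∀ i, Measurable (X i))
    (hind : iIndepFun X μ) (hlaw : ∀ i, μ.map (X i) = ν) (x : ℝ) :
    (μ.map fun ω ↦ Finset.univ.sup' Finset.univ_nonempty fun i ↦ X i ω) (Iic x)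
      = ENNReal.ofReal (cdf ν x) ^ Fintype.card ι := by
  have hpre : (fun ω ↦ Finset.univ.sup' Finset.univ_nonempty fun i ↦ X i ω) ⁻¹' Iic x
      = ⋂ i, X i ⁻¹' Iic x := by
    ext ω
    simp
  rw [Measure.map_apply (by fun_prop) measurableSet_Iic, hpre,
    hind.meas_iInter fun i ↦ ⟨Iic x, measurableSet_Iic, rfl⟩]
  simp_rw [← Measure.map_apply (hX _) measurableSet_Iic, hlaw, ofReal_cdf]
  rw [Finset.prod_const, Finset.card_univ]

lemma ProbabilityTheory.iIndepFun.identDistrib_sup'_quantile [IsProbabilityMeasure μ]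
    (hX : ∀ i, Measurable (X i)) (hind : iIndepFun X μ) (hlaw : ∀ i, μ.map (X i) = ν) :
    IdentDistrib (fun ω ↦ Finset.univ.sup' Finset.univ_nonempty fun i ↦ X i ω) (quantile ν) μ
      ((volume.restrict (Ioo 0 1)).withDensity
        fun p ↦ ENNReal.ofReal (Fintype.card ι * p ^ (Fintype.card ι - 1))) where
  aemeasurable_fst := by fun_prop
  aemeasurable_snd := aemeasurable_quantile.mono_ac (withDensity_absolutelyContinuous _ _)
  map_eq := by
    have := Measure.isProbabilityMeasure_map (μ := μ)
      (by fun_prop :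
        AEMeasurable (fun ω ↦ Finset.univ.sup' Finset.univ_nonempty fun i ↦ X i ω) μ)
    refine Measure.ext_of_Iic _ _ fun x ↦ ?_
    rw [hind.map_sup'_Iic hX hlaw, map_quantile_withDensity_Iic,
      setLIntegral_Ioc_natCast_mul_pow Fintype.card_ne_zero (cdf_nonneg ν x),
      ENNReal.ofReal_pow (cdf_nonneg ν x)]

lemma ProbabilityTheory.iIndepFun.integral_sup' [IsProbabilityMeasure μ]
    (hX : ∀ i, Measurable (X i)) (hind : iIndepFun X μ) (hlaw : ∀ i, μ.map (X i) = ν) :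
    ∫ ω, Finset.univ.sup' Finset.univ_nonempty (fun i ↦ X i ω) ∂μ
      = ∫ p in Ioo 0 1, quantile ν p * (Fintype.card ι * p ^ (Fintype.card ι - 1)) := by
  rw [(hind.identDistrib_sup'_quantile hX hlaw).integral_eq,
    integral_withDensity_eq_integral_toReal_smul (by fun_prop)
      (ae_of_all _ fun _ ↦ ENNReal.ofReal_lt_top)]
  refine setIntegral_congr_fun measurableSet_Ioo fun p hp ↦ ?_
  rw [ENNReal.toReal_ofReal (by have := hp.1.le; positivity), smul_eq_mul, mul_comm]

end Maximum

theorem mean_max_iid_le_general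
    {Ω : Type*} [MeasurableSpace Ω] (μ : Measure Ω) [IsProbabilityMeasure μ]
    (n : ℕ) (hn : 0 < n) (ξ : Fin n → Ω → ℝ)
    (hmeas : ∀ k, Measurable (ξ k))
    (hindep : iIndepFun ξ μ)
    (hident : ∀ k, IdentDistrib (ξ k) (ξ ⟨0, hn⟩) μ μ)
    (hvar : MemLp (ξ ⟨0, hn⟩) 2 μ) :
    ∫ ω, (Finset.univ.sup' (Finset.univ_nonempty_iff.mpr (Fin.pos_iff_nonempty.mp hn))
          fun k : Fin n => ξ k ω) ∂μ
      ≤ (∫ ω, ξ ⟨0, hn⟩ ω ∂μ)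
          + ((n : ℝ) - 1) / Real.sqrt (2 * (n : ℝ) - 1)
            * Real.sqrt (variance (ξ ⟨0, hn⟩) μ) := by
  have : Nonempty (Fin n) := Fin.pos_iff_nonempty.mp hn
  set ξ₀ := ξ ⟨0, hn⟩
  have : IsProbabilityMeasure (μ.map ξ₀) :=
    Measure.isProbabilityMeasure_map (hmeas _).aemeasurable
  set Q := quantile (μ.map ξ₀)
  set w : ℝ → ℝ := fun p ↦ n * p ^ (n - 1)
  have hQ : IdentDistrib Q ξ₀ (volume.restrict (Ioo 0 1)) μ := identDistrib_quantile_map (hmeas _)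
  have hQ2 : MemLp Q 2 (volume.restrict (Ioo 0 1)) := hQ.memLp_iff.2 hvar
  have hmax : ∫ ω, Finset.univ.sup' Finset.univ_nonempty (fun k ↦ ξ k ω) ∂μ
      = ∫ p in Ioo 0 1, Q p * w p := by
    simpa using hindep.integral_sup' hmeas fun k ↦ (hident k).map_eq
  have hn1 : (1 : ℝ) ≤ n := by exact_mod_cast hn
  calc _ = ∫ ω, ξ₀ ω ∂μ + cov[Q, w; volume.restrict (Ioo 0 1)] := by
        rw [covariance_eq_sub hQ2 (memLp_natCast_mul_pow_Ioo n),
          integral_Ioo_natCast_mul_pow hn.ne', hQ.integral_eq, hmax, mul_one, add_sub_cancel]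
        rfl
    _ ≤ ∫ ω, ξ₀ ω ∂μ + √Var[Q; volume.restrict (Ioo 0 1)] * √Var[w; volume.restrict (Ioo 0 1)] :=
        (add_le_add_iff_left _).2 <|
          covariance_le_sqrt_variance_mul_sqrt_variance hQ2 (memLp_natCast_mul_pow_Ioo n)
    _ = _ := by
        rw [hQ.variance_eq, variance_natCast_mul_pow_Ioo hn, Real.sqrt_div' _ (by linarith),
          Real.sqrt_sq (by linarith)]
        ring

/-- **Gumbel–Hartley–David bound.** If `ξ 1, …, ξ n` are i.i.d. random
variables with finite mean and finite variance, then
`E[max_{1 ≤ k ≤ n} ξ k] ≤ E[ξ 1] + ((n-1)/√(2n-1)) √(Var[ξ 1])`. -/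
theorem mean_max_iid_le
    {Ω : Type*} [MeasurableSpace Ω] (μ : Measure Ω) [IsProbabilityMeasure μ]
    (n : ℕ) (hn : 0 < n) (ξ : Fin n → Ω → ℝ)
    (hmeas : ∀ k, Measurable (ξ k))
    (hindep : iIndepFun ξ μ)
    (hident : ∀ k, IdentDistrib (ξ k) (ξ ⟨0, hn⟩) μ μ)
    (hint : Integrable (ξ ⟨0, hn⟩) μ)
    (hvar : MemLp (ξ ⟨0, hn⟩) 2 μ) :
    ∫ ω, (Finset.univ.sup' (Finset.univ_nonempty_iff.mpr (Fin.pos_iff_nonempty.mp hn))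
          fun k : Fin n => ξ k ω) ∂μ
      ≤ (∫ ω, ξ ⟨0, hn⟩ ω ∂μ)
          + ((n : ℝ) - 1) / Real.sqrt (2 * (n : ℝ) - 1)
            * Real.sqrt (variance (ξ ⟨0, hn⟩) μ) :=
  mean_max_iid_le_general μ n hn ξ hmeas hindep hident hvar
end

section
/- Let ξ_1, …, ξ_n be real numbers and let a ≤ 0 be a real number. Then max_{1 ≤ l ≤ k ≤ n} Σ_{i=l}^{k} ξ_i ≤ max_{1 ≤ k ≤ n} Σ_{i=1}^{k} (ξ_i − a) + max_{1 ≤ k ≤ n} Σ_{i=1}^{k} (a − ξ_i) + max_{1 ≤ k ≤ n} ξ_k. -/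
open Finset

/-- For real numbers `ξ 1, …, ξ n` and `a ≤ 0`,
`max_{1 ≤ l ≤ k ≤ n} ∑_{i=l}^{k} ξ i
  ≤ max_{1 ≤ k ≤ n} ∑_{i=1}^{k} (ξ i - a) + max_{1 ≤ k ≤ n} ∑_{i=1}^{k} (a - ξ i)
      + max_{1 ≤ k ≤ n} ξ k`. -/
theorem max_double_partial_sum_le
    (n : ℕ) (hn : 0 < n) (ξ : Fin n → ℝ) (a : ℝ) (ha : a ≤ 0) :
    (Finset.univ.sup' (Finset.univ_nonempty_iff.mpr (Fin.pos_iff_nonempty.mp hn))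
        fun l : Fin n =>
          (Finset.Ici l).sup' Finset.nonempty_Ici
            fun k => ∑ i ∈ Finset.Icc l k, ξ i)
      ≤ (Finset.univ.sup' (Finset.univ_nonempty_iff.mpr (Fin.pos_iff_nonempty.mp hn))
            fun k : Fin n => ∑ i ∈ Finset.Iic k, (ξ i - a))
        + (Finset.univ.sup' (Finset.univ_nonempty_iff.mpr (Fin.pos_iff_nonempty.mp hn))
            fun k : Fin n => ∑ i ∈ Finset.Iic k, (a - ξ i))
        + (Finset.univ.sup' (Finset.univ_nonempty_iff.mpr (Fin.pos_iff_nonempty.mp hn))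
            fun k : Fin n => ξ k) := by
  apply Finset.sup'_le
  intro l _
  apply Finset.sup'_le
  intro k hk
  have hlk : l ≤ k := Finset.mem_Ici.mp hk
  have hunion : Finset.Iic l ∪ Finset.Ioc l k = Finset.Iic k := by
    ext x
    simp only [Finset.mem_union, Finset.mem_Iic, Finset.mem_Ioc, Fin.le_def, Fin.lt_def]
    have := (Fin.le_def).mp hlk
    omega
  have hdisj : Disjoint (Finset.Iic l) (Finset.Ioc l k) := by
    rw [Finset.disjoint_left]
    intro x hx hx'
    exact absurd (Finset.mem_Iic.mp hx) (not_le.mpr (Finset.mem_Ioc.mp hx').1)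
  have key : ∑ i ∈ Finset.Icc l k, ξ i
      = ξ l + ((∑ i ∈ Finset.Iic k, (ξ i - a)) + (∑ i ∈ Finset.Iic l, (a - ξ i))
          + (Finset.Ioc l k).card * a) := by
    rw [← hunion, Finset.sum_union hdisj, Finset.Icc_eq_cons_Ioc hlk, Finset.sum_cons]
    simp [Finset.sum_sub_distrib]
    ring
  rw [key]
  have hA : ∑ i ∈ Finset.Iic k, (ξ i - a)
      ≤ Finset.univ.sup' (Finset.univ_nonempty_iff.mpr (Fin.pos_iff_nonempty.mp hn))
          (fun k : Fin n => ∑ i ∈ Finset.Iic k, (ξ i - a)) :=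
    Finset.le_sup' (fun k : Fin n => ∑ i ∈ Finset.Iic k, (ξ i - a)) (Finset.mem_univ k)
  have hB : ∑ i ∈ Finset.Iic l, (a - ξ i)
      ≤ Finset.univ.sup' (Finset.univ_nonempty_iff.mpr (Fin.pos_iff_nonempty.mp hn))
          (fun k : Fin n => ∑ i ∈ Finset.Iic k, (a - ξ i)) :=
    Finset.le_sup' (fun k : Fin n => ∑ i ∈ Finset.Iic k, (a - ξ i)) (Finset.mem_univ l)
  have hC : ξ l ≤ Finset.univ.sup' (Finset.univ_nonempty_iff.mpr (Fin.pos_iff_nonempty.mp hn))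
      (fun k : Fin n => ξ k) := Finset.le_sup' (fun k : Fin n => ξ k) (Finset.mem_univ l)
  have hca : ((Finset.Ioc l k).card : ℝ) * a ≤ 0 :=
    mul_nonpos_of_nonneg_of_nonpos (Nat.cast_nonneg _) ha
  linarith
end

section
/- For the tandem queueing system with infinite buffers, the recursively defined departure epochs admit the explicit representation: for every m = 1, …, M and every n ≥ 1, D_m(n) = max over all index chains 1 ≤ k_1 ≤ k_2 ≤ ⋯ ≤ k_m ≤ n of the quantity Σ_{j=1}^{k_1} τ_{0,j} + Σ_{j=k_1}^{k_2} τ_{1,j} + ⋯ + Σ_{j=k_m}^{n} τ_{m,j}, where each sum Σ_{j=p}^{q} includes both endpoints p and q. -/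
open Finset

/-- Departure epochs of the tandem queueing system with infinite buffers:
`depart τ i 0 = 0`, `depart τ 0 n = depart τ 0 (n-1) + τ 0 n`, and
`depart τ m n = max (depart τ (m-1) n) (depart τ m (n-1)) + τ m n` for `m, n ≥ 1`.
Here `τ i n` is the interarrival time (`i = 0`) or the service time at
server `i` of the `n`-th customer. -/
noncomputable def depart (τ : ℕ → ℕ → ℝ) : ℕ → ℕ → ℝ
  | 0, 0 => 0
  | 0, n + 1 => depart τ 0 n + τ 0 (n + 1)
  | _ + 1, 0 => 0
  | m + 1, n + 1 =>
      max (depart τ m (n + 1)) (depart τ (m + 1) n) + τ (m + 1) (n + 1)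
  termination_by m n => (m, n)

lemma depart_zero (τ : ℕ → ℕ → ℝ) (n : ℕ) :
    depart τ 0 n = ∑ j ∈ Icc 1 n, τ 0 j := by
  induction n with
  | zero => simp [depart]
  | succ n ih =>
      rw [show depart τ 0 (n+1) = depart τ 0 n + τ 0 (n+1) from by simp [depart], ih,
        Finset.sum_Icc_succ_top (by omega : 1 ≤ n + 1)]

lemma depart_nonneg (τ : ℕ → ℕ → ℝ) (hτ : ∀ i n, 0 ≤ τ i n) :
    ∀ m n, 0 ≤ depart τ m n := by
  intro m
  induction m with
  | zero =>
      intro n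
      rw [depart_zero]
      exact Finset.sum_nonneg fun j _ => hτ 0 j
  | succ m ihm =>
      intro n
      induction n with
      | zero => simp [depart]
      | succ n ihn =>
          rw [show depart τ (m+1) (n+1)
              = max (depart τ m (n+1)) (depart τ (m+1) n) + τ (m+1) (n+1) from by simp [depart]]
          have := le_max_right (depart τ m (n+1)) (depart τ (m+1) n)
          have := hτ (m+1) (n+1)
          linarith

/-- Extend a maximizing chain for `(m, n)` to one for `(m+1, n)` when
`depart τ (m+1) n = depart τ m n + τ (m+1) n`. -/
lemma chain_extend_top (τ : ℕ → ℕ → ℝ) (m n : ℕ) (k : ℕ → ℕ)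
    (hk : Monotone k) (hk0 : k 0 = 1) (hk1 : k (m + 1) = n)
    (hks : depart τ m n = ∑ i ∈ range (m + 1), ∑ j ∈ Icc (k i) (k (i + 1)), τ i j)
    (hmax : depart τ (m + 1) n = depart τ m n + τ (m + 1) n) :
    ∃ k' : ℕ → ℕ, Monotone k' ∧ k' 0 = 1 ∧ k' (m + 1 + 1) = n ∧
      depart τ (m + 1) n
        = ∑ i ∈ range (m + 1 + 1), ∑ j ∈ Icc (k' i) (k' (i + 1)), τ i j := by
  refine ⟨fun i => k (min i (m+1)), hk.comp (fun a b hab => min_le_min hab le_rfl),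
    by simpa using hk0, by simpa using hk1, ?_⟩
  have e4 : ∑ i ∈ range (m + 1 + 1),
        ∑ j ∈ Icc (k (min i (m+1))) (k (min (i+1) (m+1))), τ i j
      = ∑ i ∈ range (m + 1), ∑ j ∈ Icc (k (min i (m+1))) (k (min (i+1) (m+1))), τ i j
        + ∑ j ∈ Icc (k (min (m+1) (m+1))) (k (min (m+1+1) (m+1))), τ (m+1) j :=
    Finset.sum_range_succ _ _
  have e5 : ∀ i ∈ range (m+1),
      ∑ j ∈ Icc (k (min i (m+1))) (k (min (i+1) (m+1))), τ i j
        = ∑ j ∈ Icc (k i) (k (i+1)), τ i j := by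
    intro i hi
    simp only [Finset.mem_range] at hi
    rw [Nat.min_eq_left (by omega), Nat.min_eq_left (by omega)]
  rw [e4, Finset.sum_congr rfl e5, Nat.min_eq_left le_rfl,
    Nat.min_eq_right (by omega), hk1]
  simp only [Finset.Icc_self, Finset.sum_singleton]
  rw [hmax, hks]

lemma depart_mem (τ : ℕ → ℕ → ℝ) (hτ : ∀ i n, 0 ≤ τ i n) :
    ∀ m n, 1 ≤ n → ∃ k : ℕ → ℕ, Monotone k ∧ k 0 = 1 ∧ k (m + 1) = n ∧
      depart τ m n = ∑ i ∈ range (m + 1), ∑ j ∈ Icc (k i) (k (i + 1)), τ i j := by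
  intro m
  induction m with
  | zero =>
      intro n hn
      refine ⟨fun i => if i = 0 then 1 else n, ?_, by simp, by simp, ?_⟩
      · intro a b hab
        by_cases ha : a = 0 <;> by_cases hb : b = 0 <;> simp [ha, hb] <;> omega
      · simp [depart_zero]
  | succ m ihm =>
      intro n hn
      induction n, hn using Nat.le_induction with
      | base =>
          obtain ⟨k, hk, hk0, hk1, hks⟩ := ihm 1 le_rfl
          refine chain_extend_top τ m 1 k hk hk0 hk1 hks ?_
          rw [show depart τ (m+1) 1
              = max (depart τ m 1) (depart τ (m+1) 0) + τ (m+1) 1 from by simp [depart],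
            show depart τ (m+1) 0 = 0 from by simp [depart],
            max_eq_left (depart_nonneg τ hτ m 1)]
      | succ n hn ihn =>
          have hd : depart τ (m+1) (n+1)
              = max (depart τ m (n+1)) (depart τ (m+1) n) + τ (m+1) (n+1) := by
            simp [depart]
          by_cases hcase : depart τ (m+1) n ≤ depart τ m (n+1)
          · obtain ⟨k, hk, hk0, hk1, hks⟩ := ihm (n+1) (by omega)
            exact chain_extend_top τ m (n+1) k hk hk0 hk1 hks
              (by rw [hd, max_eq_left hcase])
          · push_neg at hcase
            obtain ⟨k, hk, hk0, hk1, hks⟩ := ihn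
            have hkb : ∀ i, i ≤ m + 2 → k i ≤ n := by
              intro i hi
              have := hk (show i ≤ m + 1 + 1 by omega)
              omega
            refine ⟨fun i => if i ≤ m + 1 then k i else n + 1, ?_, ?_, ?_, ?_⟩
            · intro a b hab
              by_cases ha : a ≤ m + 1 <;> by_cases hb : b ≤ m + 1 <;>
                simp only [ha, hb, if_true, if_false, ite_true, ite_false]
              · exact hk hab
              · exact le_trans (hkb a (by omega)) (by omega)
              · omega
              · exact le_rfl
            · simp [hk0]
            · simp
            · have e4 : ∑ i ∈ range (m + 1 + 1),
                  ∑ j ∈ Icc (if i ≤ m + 1 then k i else n + 1)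
                    (if i + 1 ≤ m + 1 then k (i+1) else n + 1), τ i j
                = ∑ i ∈ range (m + 1),
                    ∑ j ∈ Icc (if i ≤ m + 1 then k i else n + 1)
                      (if i + 1 ≤ m + 1 then k (i+1) else n + 1), τ i j
                  + ∑ j ∈ Icc (if m + 1 ≤ m + 1 then k (m+1) else n + 1)
                      (if m + 1 + 1 ≤ m + 1 then k (m+1+1) else n + 1), τ (m+1) j :=
                Finset.sum_range_succ _ _
              have e5 : ∀ i ∈ range (m+1),
                  ∑ j ∈ Icc (if i ≤ m + 1 then k i else n + 1)
                    (if i + 1 ≤ m + 1 then k (i+1) else n + 1), τ i j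
                    = ∑ j ∈ Icc (k i) (k (i+1)), τ i j := by
                intro i hi
                simp only [Finset.mem_range] at hi
                rw [if_pos (by omega), if_pos (by omega)]
              have e6 : ∑ i ∈ range (m + 1 + 1), ∑ j ∈ Icc (k i) (k (i + 1)), τ i j
                  = ∑ i ∈ range (m + 1), ∑ j ∈ Icc (k i) (k (i + 1)), τ i j
                    + ∑ j ∈ Icc (k (m+1)) (k (m+1+1)), τ (m+1) j :=
                Finset.sum_range_succ _ _
              rw [e4, Finset.sum_congr rfl e5, if_pos le_rfl, if_neg (by omega)]
              rw [Finset.sum_Icc_succ_top (show k (m+1) ≤ n + 1 from by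
                have := hkb (m+1) (by omega); omega) (τ (m+1))]
              rw [show k (m+1+1) = n from hk1] at e6  -- adjust: use hk1 inside e6
              rw [hd, max_eq_right (le_of_lt hcase), hks, e6]
              ring

lemma depart_le (τ : ℕ → ℕ → ℝ) (hτ : ∀ i n, 0 ≤ τ i n) :
    ∀ m n, 1 ≤ n → ∀ k : ℕ → ℕ, Monotone k → k 0 = 1 → k (m + 1) = n →
      ∑ i ∈ range (m + 1), ∑ j ∈ Icc (k i) (k (i + 1)), τ i j ≤ depart τ m n := by
  intro m
  induction m with
  | zero =>
      intro n hn k hk hk0 hk1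
      rw [depart_zero]
      simp [hk0, hk1]
  | succ m ihm =>
      intro n hn
      induction n, hn using Nat.le_induction with
      | base =>
          intro k hk hk0 hk1
          have h1 : ∀ i, i ≤ m + 2 → k i = 1 := by
            intro i hi
            have h2 : k i ≤ k (m + 1 + 1) := hk hi
            have h3 : k 0 ≤ k i := hk (Nat.zero_le i)
            rw [hk1] at h2; rw [hk0] at h3; omega
          have hle : ∑ i ∈ range (m + 1), ∑ j ∈ Icc (k i) (k (i + 1)), τ i j
              ≤ depart τ m 1 := ihm 1 le_rfl k hk hk0 (h1 (m+1) (by omega))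
          rw [Finset.sum_range_succ, h1 (m+1) (by omega), h1 (m+2) (by omega)]
          rw [show depart τ (m+1) 1
              = max (depart τ m 1) (depart τ (m+1) 0) + τ (m+1) 1 from by simp [depart]]
          have := le_max_left (depart τ m 1) (depart τ (m+1) 0)
          simp only [Finset.Icc_self, Finset.sum_singleton]
          linarith
      | succ n hn ihn =>
          intro k hk hk0 hk1
          have hd : depart τ (m+1) (n+1)
              = max (depart τ m (n+1)) (depart τ (m+1) n) + τ (m+1) (n+1) := by
            simp [depart]
          by_cases h : k (m + 1) = n + 1
          · have hle : ∑ i ∈ range (m + 1), ∑ j ∈ Icc (k i) (k (i + 1)), τ i j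
                ≤ depart τ m (n+1) := ihm (n+1) (by omega) k hk hk0 h
            rw [Finset.sum_range_succ, h, hk1]
            have := le_max_left (depart τ m (n+1)) (depart τ (m+1) n)
            simp only [Finset.Icc_self, Finset.sum_singleton]
            rw [hd]; linarith
          · have hkm : k (m+1) ≤ n := by
              have h2 := hk (Nat.le_succ (m+1))
              rw [hk1] at h2; omega
            set k' : ℕ → ℕ := fun i => min (k i) n with hk'def
            have hk' : Monotone k' := hk.min monotone_const
            have hk'0 : k' 0 = 1 := by simp [hk'def, hk0]; omega
            have hk'1 : k' (m + 1 + 1) = n := by simp [hk'def, hk1]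
            have hle : ∑ i ∈ range (m + 1 + 1), ∑ j ∈ Icc (k' i) (k' (i + 1)), τ i j
                ≤ depart τ (m+1) n := ihn k' hk' hk'0 hk'1
            have heqterm : ∀ i ∈ range (m + 1),
                ∑ j ∈ Icc (k i) (k (i + 1)), τ i j
                  = ∑ j ∈ Icc (k' i) (k' (i + 1)), τ i j := by
              intro i hi
              simp only [Finset.mem_range] at hi
              have h1 : k i ≤ n := le_trans (hk (by omega : i ≤ m + 1)) hkm
              have h2 : k (i+1) ≤ n := le_trans (hk (by omega : i + 1 ≤ m + 1)) hkm
              simp [hk'def, Nat.min_eq_left h1, Nat.min_eq_left h2]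
            have e1 : ∑ i ∈ range (m + 1 + 1), ∑ j ∈ Icc (k i) (k (i + 1)), τ i j
                = ∑ i ∈ range (m + 1), ∑ j ∈ Icc (k i) (k (i + 1)), τ i j
                  + ∑ j ∈ Icc (k (m+1)) (k (m+1+1)), τ (m+1) j :=
              Finset.sum_range_succ _ _
            have e2 := Finset.sum_congr rfl heqterm
            have e3 : ∑ j ∈ Icc (k (m+1)) (k (m+1+1)), τ (m+1) j
                = ∑ j ∈ Icc (k' (m+1)) (k' (m+1+1)), τ (m+1) j + τ (m+1) (n+1) := by
              rw [hk1, hk'1, hk'def]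
              simp only
              rw [Nat.min_eq_left hkm]
              exact Finset.sum_Icc_succ_top (by omega) _
            have e4 : ∑ i ∈ range (m + 1 + 1), ∑ j ∈ Icc (k' i) (k' (i + 1)), τ i j
                = ∑ i ∈ range (m + 1), ∑ j ∈ Icc (k' i) (k' (i + 1)), τ i j
                  + ∑ j ∈ Icc (k' (m+1)) (k' (m+1+1)), τ (m+1) j :=
              Finset.sum_range_succ _ _
            rw [e4] at hle
            rw [e1, e2, e3, hd]
            have := le_max_right (depart τ m (n+1)) (depart τ (m+1) n)
            linarith

/-- Explicit representation of the departure epochs: for `1 ≤ m ≤ M` and `n ≥ 1`,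
`D_m(n)` is the maximum, over all chains `1 ≤ k_1 ≤ ⋯ ≤ k_m ≤ n` (encoded as a
monotone `k : ℕ → ℕ` with `k 0 = 1` and `k (m+1) = n`), of
`∑_{j=1}^{k_1} τ 0 j + ∑_{j=k_1}^{k_2} τ 1 j + ⋯ + ∑_{j=k_m}^{n} τ m j`,
all sums including both endpoints. -/
theorem depart_eq_sSup (M : ℕ) (τ : ℕ → ℕ → ℝ) (hτ : ∀ i n, 0 ≤ τ i n)
    (m : ℕ) (hm1 : 1 ≤ m) (hmM : m ≤ M) (n : ℕ) (hn : 1 ≤ n) :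
    depart τ m n =
      sSup { s : ℝ | ∃ k : ℕ → ℕ, Monotone k ∧ k 0 = 1 ∧ k (m + 1) = n ∧
        s = ∑ i ∈ Finset.range (m + 1), ∑ j ∈ Finset.Icc (k i) (k (i + 1)), τ i j } := by
  symm
  apply IsGreatest.csSup_eq
  constructor
  · obtain ⟨k, hk, hk0, hk1, hks⟩ := depart_mem τ hτ m n hn
    exact ⟨k, hk, hk0, hk1, hks⟩
  · rintro s ⟨k, hk, hk0, hk1, rfl⟩
    exact depart_le τ hτ m n hn k hk hk0 hk1
end

section
/- For the tandem queueing system with infinite buffers, for every index m with 0 ≤ m ≤ M and every n ≥ 1, the completion time satisfies the pointwise upper bound D_M(n) ≤ Σ_{j=1}^{n} τ_{m,j} + max_{1 ≤ k ≤ n} Σ_{j=1}^{k} (τ_{0,j} − τ_{m,j}) + Σ_{i=1}^{M} max_{1 ≤ l ≤ k ≤ n} Σ_{j=l}^{k} (τ_{i,j} − τ_{m,j}) + M · max_{1 ≤ k ≤ n} τ_{m,k}. -/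
/-!
Queue `i + 1` unfolds into a Lindley-type bound: the `n`-th customer leaves it no later than
`D_i(l) + ∑_{j=l}^{n} τ_{i+1,j}` for some `1 ≤ l ≤ n`, namely the customer that opened the busy
period containing `n`. Measuring every service time against those of queue `m`, this costs one
segment sum `∑_{j=l}^{n} (τ_{i+1,j} - τ_{m,j})` and the doubly counted term `τ_{m,l}`. Iterating
from queue `M` down to queue `0`, where `D_0(n)` is a plain prefix sum, gives the bound.
-/

open Finset

theorem Finset.sum_Icc_one_add_sum_Icc {M : Type*} [AddCommMonoid M] (f : ℕ → M) {l n : ℕ}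
    (hl : l ≤ n) :
    ∑ j ∈ Icc 1 l, f j + ∑ j ∈ Icc l n, f j = ∑ j ∈ Icc 1 n, f j + f l := by
  have hIoc (k : ℕ) : Icc 1 k = Ioc 0 k := Icc_add_one_left_eq_Ioc 0 k
  rw [hIoc, hIoc, ← add_sum_Ioc_eq_sum_Icc hl, add_left_comm,
    sum_Ioc_consecutive f (Nat.zero_le l) hl, add_comm]

theorem sum_Icc_le_sSup_segment_sums (f : ℕ → ℝ) {N l k : ℕ} (hl : 1 ≤ l) (hlk : l ≤ k)
    (hk : k ≤ N) :
    ∑ j ∈ Icc l k, f j ≤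
      sSup {s : ℝ | ∃ l k : ℕ, 1 ≤ l ∧ l ≤ k ∧ k ≤ N ∧ s = ∑ j ∈ Icc l k, f j} := by
  refine le_csSup (Set.Finite.bddAbove ?_) ⟨l, k, hl, hlk, hk, rfl⟩
  refine (((Set.finite_Icc 0 N).prod (Set.finite_Icc 0 N)).image
    fun p : ℕ × ℕ => ∑ j ∈ Icc p.1 p.2, f j).subset ?_
  rintro s ⟨l', k', -, hlk', hk', rfl⟩
  exact ⟨(l', k'), ⟨⟨Nat.zero_le _, hlk'.trans hk'⟩, ⟨Nat.zero_le _, hk'⟩⟩, rfl⟩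

namespace depart

variable (τ : ℕ → ℕ → ℝ)

theorem zero_eq_sum : ∀ n, depart τ 0 n = ∑ j ∈ Icc 1 n, τ 0 j
  | 0 => by simp [depart]
  | n + 1 => by rw [depart, zero_eq_sum n, sum_Icc_succ_top (Nat.le_add_left 1 n)]

theorem nonneg (hτ : ∀ i n, 0 ≤ τ i n) : ∀ m n, 0 ≤ depart τ m n
  | 0, 0 | _ + 1, 0 => by rw [depart]
  | 0, n + 1 => by
      rw [depart]
      exact add_nonneg (nonneg hτ 0 n) (hτ 0 (n + 1))
  | m + 1, n + 1 => by
      rw [depart]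
      exact add_nonneg ((nonneg hτ (m + 1) n).trans (le_max_right _ _)) (hτ (m + 1) (n + 1))
  termination_by m n => (m, n)

theorem exists_succ_le_add_sum (hτ : ∀ i n, 0 ≤ τ i n) (i : ℕ) {n : ℕ} (hn : 1 ≤ n) :
    ∃ l, 1 ≤ l ∧ l ≤ n ∧ depart τ (i + 1) n ≤ depart τ i l + ∑ j ∈ Icc l n, τ (i + 1) j := by
  induction n, hn using Nat.le_induction with
  | base =>
    refine ⟨1, le_rfl, le_rfl, ?_⟩
    have hstart : depart τ (i + 1) 0 = 0 := by rw [depart]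
    rw [depart, hstart, max_eq_left (nonneg τ hτ i 1), Icc_self, sum_singleton]
  | succ n hn ih =>
    rw [depart]
    rcases le_total (depart τ (i + 1) n) (depart τ i (n + 1)) with hi | hi
    · refine ⟨n + 1, by omega, le_rfl, ?_⟩
      rw [max_eq_left hi, Icc_self, sum_singleton]
    · obtain ⟨l, hl, hln, hle⟩ := ih
      refine ⟨l, hl, by omega, ?_⟩
      rw [max_eq_right hi, sum_Icc_succ_top (by omega), ← add_assoc]
      exact add_le_add_left hle _

theorem le_sum_add_of_bounds (hτ : ∀ i n, 0 ≤ τ i n) (m N : ℕ) {P T : ℝ} {S : ℕ → ℝ}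
    (hP : ∀ k, 1 ≤ k → k ≤ N → ∑ j ∈ Icc 1 k, (τ 0 j - τ m j) ≤ P)
    (hS : ∀ i l k, 1 ≤ l → l ≤ k → k ≤ N → ∑ j ∈ Icc l k, (τ i j - τ m j) ≤ S i)
    (hT : ∀ k, 1 ≤ k → k ≤ N → τ m k ≤ T) :
    ∀ i n, 1 ≤ n → n ≤ N →
      depart τ i n ≤ ∑ j ∈ Icc 1 n, τ m j + P + ∑ p ∈ Icc 1 i, S p + i * T := by
  intro i
  induction i with
  | zero =>
    intro n hn hnN
    have hsplit : ∑ j ∈ Icc 1 n, τ 0 j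
        = ∑ j ∈ Icc 1 n, τ m j + ∑ j ∈ Icc 1 n, (τ 0 j - τ m j) := by
      rw [← sum_add_distrib]
      exact sum_congr rfl fun j _ => by ring
    simp only [zero_eq_sum, hsplit, Icc_eq_empty_of_lt zero_lt_one, sum_empty, Nat.cast_zero,
      zero_mul, add_zero]
    linarith [hP n hn hnN]
  | succ i ih =>
    intro n hn hnN
    obtain ⟨l, hl, hln, hle⟩ := exists_succ_le_add_sum τ hτ i hn
    have hsplit : ∑ j ∈ Icc l n, τ (i + 1) j
        = ∑ j ∈ Icc l n, (τ (i + 1) j - τ m j) + ∑ j ∈ Icc l n, τ m j := by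
      rw [← sum_add_distrib]
      exact sum_congr rfl fun j _ => by ring
    have hrecount := sum_Icc_one_add_sum_Icc (τ m) hln
    rw [sum_Icc_succ_top (Nat.le_add_left 1 i)]
    push_cast
    linarith [ih l hl (hln.trans hnN), hS (i + 1) l n hl hln hnN, hT l hl (hln.trans hnN)]

end depart

theorem depart_le_sum_add_general (M : ℕ) (τ : ℕ → ℕ → ℝ) (hτ : ∀ i n, 0 ≤ τ i n)
    (m : ℕ) (n : ℕ) (hn : 1 ≤ n) :
    depart τ M n ≤
      (∑ j ∈ Finset.Icc 1 n, τ m j)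
        + (Finset.Icc 1 n).sup' (Finset.nonempty_Icc.mpr hn)
            (fun k => ∑ j ∈ Finset.Icc 1 k, (τ 0 j - τ m j))
        + (∑ i ∈ Finset.Icc 1 M,
            sSup { s : ℝ | ∃ l k : ℕ, 1 ≤ l ∧ l ≤ k ∧ k ≤ n ∧
              s = ∑ j ∈ Finset.Icc l k, (τ i j - τ m j) })
        + (M : ℝ) * (Finset.Icc 1 n).sup' (Finset.nonempty_Icc.mpr hn)
            (fun k => τ m k) := by
  have hIcc {k : ℕ} (h1 : 1 ≤ k) (hk : k ≤ n) : k ∈ Icc 1 n := mem_Icc.mpr ⟨h1, hk⟩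
  exact depart.le_sum_add_of_bounds τ hτ m n
    (fun k h1 hk => le_sup' (fun k => ∑ j ∈ Icc 1 k, (τ 0 j - τ m j)) (hIcc h1 hk))
    (fun i _ _ hl hlk hk => sum_Icc_le_sSup_segment_sums (fun j => τ i j - τ m j) hl hlk hk)
    (fun k h1 hk => le_sup' (fun k => τ m k) (hIcc h1 hk)) M n hn le_rfl

/-- Pointwise upper bound on the completion time: for every `0 ≤ m ≤ M` and
`n ≥ 1`,
`D_M(n) ≤ ∑_{j=1}^{n} τ m j + max_{1 ≤ k ≤ n} ∑_{j=1}^{k} (τ 0 j - τ m j)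
  + ∑_{i=1}^{M} max_{1 ≤ l ≤ k ≤ n} ∑_{j=l}^{k} (τ i j - τ m j)
  + M · max_{1 ≤ k ≤ n} τ m k`. -/
theorem depart_le_sum_add (M : ℕ) (τ : ℕ → ℕ → ℝ) (hτ : ∀ i n, 0 ≤ τ i n)
    (m : ℕ) (hm : m ≤ M) (n : ℕ) (hn : 1 ≤ n) :
    depart τ M n ≤
      (∑ j ∈ Finset.Icc 1 n, τ m j)
        + (Finset.Icc 1 n).sup' (Finset.nonempty_Icc.mpr hn)
            (fun k => ∑ j ∈ Finset.Icc 1 k, (τ 0 j - τ m j))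
        + (∑ i ∈ Finset.Icc 1 M,
            sSup { s : ℝ | ∃ l k : ℕ, 1 ≤ l ∧ l ≤ k ∧ k ≤ n ∧
              s = ∑ j ∈ Finset.Icc l k, (τ i j - τ m j) })
        + (M : ℝ) * (Finset.Icc 1 n).sup' (Finset.nonempty_Icc.mpr hn)
            (fun k => τ m k) :=
  depart_le_sum_add_general M τ hτ m n hn
end

section
/- For the stochastic tandem queueing system with infinite buffers, suppose the sequences {τ_{i,n} : n = 1, 2, …}, i = 0, 1, …, M, are mutually independent sequences of independent and identically distributed nonnegative random variables with 0 ≤ E[τ_{i,1}] < ∞. Then there is a constant γ such that D_M(n)/n converges to γ with probability one as n → ∞, and E[D_M(n)]/n also converges to γ. -/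
/-!
Write `S_i(n)` for the total service demand of the first `n` customers at station `i`.
Unrolling the recursion of station `m + 1` back to the start of the current busy period gives
`max (D_m(n), S_{m+1}(n)) ≤ D_{m+1}(n) ≤ D_m(k) + S_{m+1}(n) - S_{m+1}(k - 1)` for some `k ≤ n`.
Hence, if `D_m(n)/n → γ_m` and `S_{m+1}(n)/n → E τ_{m+1,1}` (strong law of large numbers),
then `D_{m+1}(n)/n → max γ_m (E τ_{m+1,1})`, and by induction `γ = max_i E τ_{i,1}`.
For the means, `0 ≤ D_M(n)/n ≤ ∑_i S_i(n)/n`, and averages of identically distributed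
integrable variables are uniformly integrable, so Vitali's theorem upgrades the almost sure
convergence to convergence of the expectations.
-/

open MeasureTheory ProbabilityTheory Finset Filter

open Topology
open scoped ENNReal

namespace depart

variable (t : ℕ → ℕ → ℝ)

@[simp]
lemma zero_right (m : ℕ) : depart t m 0 = 0 := by
  cases m <;> simp [depart]

lemma zero_succ (n : ℕ) : depart t 0 (n + 1) = depart t 0 n + t 0 (n + 1) := by
  simp [depart]

lemma succ_succ (m n : ℕ) :
    depart t (m + 1) (n + 1) =
      max (depart t m (n + 1)) (depart t (m + 1) n) + t (m + 1) (n + 1) := by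
  simp [depart]

lemma zero_left (n : ℕ) : depart t 0 n = ∑ j ∈ range n, t 0 (j + 1) := by
  induction n with
  | zero => simp
  | succ n ih => rw [zero_succ, ih, sum_range_succ]

lemma add_le_succ_right (m n : ℕ) : depart t m n + t m (n + 1) ≤ depart t m (n + 1) := by
  cases m with
  | zero => rw [zero_succ]
  | succ m => rw [succ_succ]; gcongr; exact le_max_right _ _

lemma sum_range_le (m n : ℕ) : ∑ j ∈ range n, t m (j + 1) ≤ depart t m n := by
  induction n with
  | zero => simp
  | succ n ih => rw [sum_range_succ]; linarith [add_le_succ_right t m n]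

lemma le_succ_left {m : ℕ} (ht : ∀ j, 0 ≤ t (m + 1) (j + 1)) (n : ℕ) :
    depart t m n ≤ depart t (m + 1) n := by
  cases n with
  | zero => simp
  | succ n => rw [succ_succ]; linarith [le_max_left (depart t m (n + 1)) (depart t (m + 1) n), ht n]

lemma nonneg_s11 {m : ℕ} (ht : ∀ i ≤ m, ∀ j, 0 ≤ t i (j + 1)) (n : ℕ) : 0 ≤ depart t m n := by
  induction m with
  | zero => rw [zero_left]; exact sum_nonneg fun j _ => ht 0 le_rfl j
  | succ m ih =>
    exact (ih fun i hi => ht i (by omega)).trans (le_succ_left t (ht (m + 1) le_rfl) n)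

lemma le_sum_sum {m : ℕ} (ht : ∀ i ≤ m, ∀ j, 0 ≤ t i (j + 1)) (n : ℕ) :
    depart t m n ≤ ∑ i ∈ range (m + 1), ∑ j ∈ range n, t i (j + 1) := by
  induction m generalizing n with
  | zero => simp [zero_left]
  | succ m ihm =>
    induction n with
    | zero => simp
    | succ n ihn =>
      have hrow : t (m + 1) (n + 1) ≤ ∑ j ∈ range (n + 1), t (m + 1) (j + 1) :=
        single_le_sum (f := fun j => t (m + 1) (j + 1)) (fun j _ => ht (m + 1) le_rfl j)
          (self_mem_range_succ n)
      have hcol : t (m + 1) (n + 1) ≤ ∑ i ∈ range (m + 2), t i (n + 1) :=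
        single_le_sum (f := fun i => t i (n + 1)) (fun i hi => ht i (by simp at hi; omega) n)
          (self_mem_range_succ (m + 1))
      rw [succ_succ, ← max_add_add_right]
      refine max_le ?_ ?_
      · rw [sum_range_succ _ (m + 1)]
        linarith [ihm (fun i hi => ht i (by omega)) (n + 1)]
      · simp only [sum_range_succ _ n, sum_add_distrib]
        linarith

/-- `k` is the customer that opened the busy period of station `m + 1` in which customer `n`
is served. -/
lemma exists_succ_left_le (m n : ℕ) : ∃ k ≤ n, depart t (m + 1) n ≤
    depart t m k + (∑ j ∈ range n, t (m + 1) (j + 1) - ∑ j ∈ range (k - 1), t (m + 1) (j + 1)) := by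
  induction n with
  | zero => exact ⟨0, le_rfl, by simp⟩
  | succ n ih =>
    rw [succ_succ, sum_range_succ]
    rcases le_total (depart t m (n + 1)) (depart t (m + 1) n) with hle | hle
    · obtain ⟨k, hkn, hk⟩ := ih
      exact ⟨k, hkn.trans n.le_succ, by rw [max_eq_right hle]; linarith⟩
    · exact ⟨n + 1, le_rfl, by simp [max_eq_left hle]⟩

end depart

lemma exists_abs_sub_le_of_tendsto_div {f : ℕ → ℝ} {a ε : ℝ}
    (hf : Tendsto (fun n => f n / n) atTop (𝓝 a)) (hε : 0 < ε) :
    ∃ C, ∀ n : ℕ, |f n - n * a| ≤ ε * n + C := by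
  have hev : ∀ᶠ n : ℕ in atTop, |f n - n * a| - ε * n ≤ 0 := by
    filter_upwards [hf.eventually (Metric.ball_mem_nhds a hε), eventually_gt_atTop 0]
      with n hn hpos
    have hn' : (0 : ℝ) < n := Nat.cast_pos.2 hpos
    rw [Real.dist_eq] at hn
    have : f n - n * a = n * (f n / n - a) := by field_simp
    rw [this, abs_mul, Nat.abs_cast]
    linarith [mul_le_mul_of_nonneg_left hn.le hn'.le]
  obtain ⟨C, hC⟩ := (isBoundedUnder_of_eventually_le hev).bddAbove_range
  exact ⟨C, fun n => by linarith [hC (Set.mem_range_self n)]⟩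

lemma tendsto_div_max_of_le {x y d : ℕ → ℝ} {a b : ℝ}
    (hx : Tendsto (fun n => x n / n) atTop (𝓝 a)) (hy : Tendsto (fun n => y n / n) atTop (𝓝 b))
    (hlow : ∀ n, max (x n) (y n) ≤ d n)
    (hup : ∀ n, ∃ k ≤ n, d n ≤ x k + (y n - y (k - 1))) :
    Tendsto (fun n => d n / n) atTop (𝓝 (max a b)) := by
  refine tendsto_order.2 ⟨fun l hl => ?_, fun u hu => ?_⟩
  · filter_upwards [(hx.max hy).eventually (lt_mem_nhds hl)] with n hn
    rw [max_div_div_right n.cast_nonneg] at hn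
    exact hn.trans_le (by gcongr; exact hlow n)
  · set ε := (u - max a b) / 4
    have hε : 0 < ε := by simp only [ε]; linarith
    obtain ⟨C, hC⟩ := exists_abs_sub_le_of_tendsto_div hx hε
    obtain ⟨C', hC'⟩ := exists_abs_sub_le_of_tendsto_div hy hε
    set K := C + 2 * C' + |b|
    filter_upwards [(tendsto_const_div_atTop_nhds_zero_nat K).eventually (gt_mem_nhds hε),
      eventually_gt_atTop 0] with n hK hpos
    have hn : (0 : ℝ) < n := Nat.cast_pos.2 hpos
    obtain ⟨k, hkn, hk⟩ := hup n
    have hk' : (k : ℝ) ≤ n := by exact_mod_cast hkn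
    have hj : ((k - 1 : ℕ) : ℝ) ≤ k := by exact_mod_cast k.sub_le 1
    have hj' : (k : ℝ) ≤ (k - 1 : ℕ) + 1 := by exact_mod_cast (by omega : k ≤ k - 1 + 1)
    have hmax : k * a + (n - k) * b + (k - (k - 1 : ℕ)) * b ≤ n * max a b + |b| := by
      have h1 : k * a ≤ k * max a b := by gcongr; exact le_max_left a b
      have h2 : (n - k) * b ≤ (n - k) * max a b :=
        mul_le_mul_of_nonneg_left (le_max_right a b) (by linarith)
      have h3 : (k - (k - 1 : ℕ)) * b ≤ |b| :=
        calc (k - (k - 1 : ℕ)) * b ≤ (k - (k - 1 : ℕ)) * |b| :=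
              mul_le_mul_of_nonneg_left (le_abs_self b) (by linarith)
          _ ≤ |b| := by nlinarith [abs_nonneg b]
      linarith
    have hbound : d n ≤ n * max a b + 3 * ε * n + K := by
      obtain ⟨-, hxk⟩ := abs_le.1 (hC k)
      obtain ⟨-, hyn⟩ := abs_le.1 (hC' n)
      obtain ⟨hyj, -⟩ := abs_le.1 (hC' (k - 1))
      have hεk : ε * k ≤ ε * n := by gcongr
      have hεj : ε * (k - 1 : ℕ) ≤ ε * n := by gcongr; omega
      linarith
    calc d n / n ≤ (n * max a b + 3 * ε * n + K) / n := by gcongr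
      _ = max a b + 3 * ε + K / n := by field_simp
      _ < u := by simp only [ε] at hK ⊢; linarith

lemma depart.tendsto_div {t : ℕ → ℕ → ℝ} {a : ℕ → ℝ} {m : ℕ}
    (ht : ∀ i ≤ m, ∀ j, 0 ≤ t i (j + 1))
    (hrow : ∀ i ≤ m, Tendsto (fun n => (∑ j ∈ range n, t i (j + 1)) / n) atTop (𝓝 (a i))) :
    Tendsto (fun n => depart t m n / n) atTop
      (𝓝 ((range (m + 1)).sup' nonempty_range_add_one a)) := by
  induction m with
  | zero => simpa [depart.zero_left] using hrow 0 le_rfl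
  | succ m ih =>
    have hsup : (range (m + 2)).sup' nonempty_range_add_one a
        = max ((range (m + 1)).sup' nonempty_range_add_one a) (a (m + 1)) := by
      rw [max_comm, ← sup'_insert]
      simp only [range_add_one (n := m + 1)]
    rw [hsup]
    exact tendsto_div_max_of_le (ih (fun i hi => ht i (by omega)) fun i hi => hrow i (by omega))
      (hrow (m + 1) le_rfl)
      (fun n => max_le (depart.le_succ_left t (ht (m + 1) le_rfl) n)
        (depart.sum_range_le t (m + 1) n))
      (depart.exists_succ_left_le t m)

section UnifIntegrable

variable {α ι β : Type*} [MeasurableSpace α] {μ : Measure α} [NormedAddCommGroup β] {p : ℝ≥0∞}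

lemma UnifIntegrable.mono {f g : ι → α → β} (hg : UnifIntegrable g p μ)
    (hfg : ∀ i, ∀ᵐ x ∂μ, ‖f i x‖ ≤ ‖g i x‖) : UnifIntegrable f p μ := by
  intro ε hε
  obtain ⟨δ, hδ, hgδ⟩ := hg hε
  refine ⟨δ, hδ, fun i s hs hμs => (eLpNorm_mono_ae ?_).trans (hgδ i s hs hμs)⟩
  filter_upwards [hfg i] with x hx
  by_cases hxs : x ∈ s <;> simp [hxs, hx]

lemma unifIntegrable_finset_sum {κ : Type*} (s : Finset κ) {f : κ → ι → α → β} (hp : 1 ≤ p)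
    (hmeas : ∀ k ∈ s, ∀ i, AEStronglyMeasurable (f k i) μ)
    (hf : ∀ k ∈ s, UnifIntegrable (f k) p μ) :
    UnifIntegrable (fun i => ∑ k ∈ s, f k i) p μ := by
  classical
  induction s using Finset.induction_on with
  | empty => exact fun ε _ => ⟨1, one_pos, fun i s _ _ => by simp⟩
  | insert k s hks ih =>
    simp only [sum_insert hks]
    exact (hf k (mem_insert_self k s)).add (ih (fun k hk => hmeas k (mem_insert_of_mem hk))
      fun k hk => hf k (mem_insert_of_mem hk)) hp (hmeas k (mem_insert_self k s))
      fun i => Finset.aestronglyMeasurable_sum _ fun k hk => hmeas k (mem_insert_of_mem hk) i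

end UnifIntegrable

lemma tendsto_integral_of_tendsto_ae_of_unifIntegrable {α E : Type*} [MeasurableSpace α]
    {μ : Measure α} [IsFiniteMeasure μ] [NormedAddCommGroup E] [NormedSpace ℝ E] [CompleteSpace E]
    {f : ℕ → α → E} {g : α → E} (hf : ∀ n, AEStronglyMeasurable (f n) μ) (hg : Integrable g μ)
    (hui : UnifIntegrable f 1 μ) (hfg : ∀ᵐ x ∂μ, Tendsto (fun n => f n x) atTop (𝓝 (g x))) :
    Tendsto (fun n => ∫ x, f n x ∂μ) atTop (𝓝 (∫ x, g x ∂μ)) := by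
  have hL1 := tendsto_Lp_finite_of_tendsto_ae le_rfl ENNReal.one_ne_top hf
    (memLp_one_iff_integrable.2 hg) hui hfg
  refine tendsto_integral_of_L1' g hg.1 ?_ hL1
  filter_upwards [hL1.eventually (gt_mem_nhds ENNReal.zero_lt_top)] with n hn
  simpa using (memLp_one_iff_integrable.1 ⟨(hf n).sub hg.1, hn⟩).add hg

lemma depart.aemeasurable {Ω : Type*} [MeasurableSpace Ω] {μ : Measure Ω} {τ : ℕ → ℕ → Ω → ℝ}
    {m : ℕ} (hτ : ∀ i ≤ m, ∀ j, AEMeasurable (τ i (j + 1)) μ) (n : ℕ) :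
    AEMeasurable (fun ω => depart (fun i j => τ i j ω) m n) μ := by
  induction m generalizing n with
  | zero =>
    simp only [depart.zero_left]
    exact Finset.aemeasurable_fun_sum _ fun j _ => hτ 0 le_rfl j
  | succ m ihm =>
    induction n with
    | zero => simp only [depart.zero_right]; exact aemeasurable_const
    | succ n ihn =>
      simp only [depart.succ_succ]
      exact ((ihm (fun i hi => hτ i (by omega)) (n + 1)).max ihn).add (hτ (m + 1) le_rfl n)

lemma unifIntegrable_depart_div {Ω : Type*} [MeasurableSpace Ω] {μ : Measure Ω}
    [IsFiniteMeasure μ] {M : ℕ} {τ : ℕ → ℕ → Ω → ℝ}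
    (hpos : ∀ i ≤ M, ∀ j ω, 0 ≤ τ i (j + 1) ω) (hint : ∀ i ≤ M, Integrable (τ i 1) μ)
    (hident : ∀ i ≤ M, ∀ j, IdentDistrib (τ i (j + 1)) (τ i 1) μ μ) :
    UnifIntegrable (fun n ω => depart (fun i j => τ i j ω) M n / n) 1 μ := by
  have hrow : ∀ i ∈ range (M + 1),
      UnifIntegrable (fun n ω => (∑ j ∈ range n, τ i (j + 1) ω) / n) 1 μ := by
    intro i hi
    have hi : i ≤ M := Nat.lt_succ_iff.1 (mem_range.1 hi)
    have := (uniformIntegrable_average_real le_rfl (MemLp.uniformIntegrable_of_identDistrib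
      (j := 0) le_rfl ENNReal.one_ne_top (memLp_one_iff_integrable.2 (hint i hi))
      (hident i hi))).2.1
    convert this using 3 with n ω
    simp
  have hmeas : ∀ i ∈ range (M + 1), ∀ n,
      AEStronglyMeasurable (fun ω => (∑ j ∈ range n, τ i (j + 1) ω) / n) μ := fun i hi n =>
    ((Finset.aemeasurable_fun_sum _ fun j _ => (hident i (Nat.lt_succ_iff.1 (mem_range.1 hi))
      j).aemeasurable_fst).div_const _).aestronglyMeasurable
  refine UnifIntegrable.mono (unifIntegrable_finset_sum _ le_rfl hmeas hrow)
    fun n => ae_of_all _ fun ω => ?_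
  have hnonneg : ∀ i ≤ M, ∀ j, 0 ≤ τ i (j + 1) ω := fun i hi j => hpos i hi j ω
  have hD := depart.nonneg_s11 (fun i j => τ i j ω) hnonneg n
  have hDle := depart.le_sum_sum (fun i j => τ i j ω) hnonneg n
  rw [Finset.sum_apply, ← sum_div, Real.norm_of_nonneg (div_nonneg hD n.cast_nonneg),
    Real.norm_of_nonneg (div_nonneg (hD.trans hDle) n.cast_nonneg)]
  gcongr

theorem exists_mean_cycle_time_general
    {Ω : Type*} [MeasurableSpace Ω] (μ : Measure Ω) [IsProbabilityMeasure μ]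
    (M : ℕ) (τ : ℕ → ℕ → Ω → ℝ)
    (hpos : ∀ i ≤ M, ∀ n, 1 ≤ n → ∀ ω, 0 ≤ τ i n ω)
    (hindep : iIndepFun
        (fun p : Fin (M + 1) × ℕ => τ (p.1 : ℕ) (p.2 + 1)) μ)
    (hident : ∀ i ≤ M, ∀ n, 1 ≤ n → IdentDistrib (τ i n) (τ i 1) μ μ)
    (hint : ∀ i ≤ M, Integrable (τ i 1) μ) :
    ∃ γ : ℝ,
      (∀ᵐ ω ∂μ, Tendsto (fun n : ℕ => depart (fun i j => τ i j ω) M n / n)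
          atTop (nhds γ))
        ∧ Tendsto (fun n : ℕ => (∫ ω, depart (fun i j => τ i j ω) M n ∂μ) / n)
            atTop (nhds γ) := by
  have hpos' : ∀ i ≤ M, ∀ j ω, 0 ≤ τ i (j + 1) ω := fun i hi j => hpos i hi (j + 1) j.succ_pos
  have hident' : ∀ i ≤ M, ∀ j, IdentDistrib (τ i (j + 1)) (τ i 1) μ μ :=
    fun i hi j => hident i hi (j + 1) j.succ_pos
  have hrows : ∀ᵐ ω ∂μ, ∀ i ≤ M, Tendsto (fun n : ℕ => (∑ j ∈ range n, τ i (j + 1) ω) / n)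
      atTop (𝓝 (∫ ω, τ i 1 ω ∂μ)) := by
    refine (Set.finite_Iic M).eventually_all.2 fun i hi => strong_law_ae_real _ (hint i hi)
      (fun j k hjk => ?_) (hident' i hi)
    let r : Fin (M + 1) := ⟨i, Nat.lt_succ_of_le hi⟩
    exact hindep.indepFun (i := (r, j)) (j := (r, k)) (by simp [hjk])
  set γ := (range (M + 1)).sup' nonempty_range_add_one fun i => ∫ ω, τ i 1 ω ∂μ
  have hae : ∀ᵐ ω ∂μ, Tendsto (fun n : ℕ => depart (fun i j => τ i j ω) M n / n) atTop (𝓝 γ) :=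
    hrows.mono fun ω hω => depart.tendsto_div (fun i hi j => hpos' i hi j ω) hω
  refine ⟨γ, hae, ?_⟩
  have hmeas : ∀ n : ℕ, AEStronglyMeasurable (fun ω => depart (fun i j => τ i j ω) M n / n) μ :=
    fun n => ((depart.aemeasurable (fun i hi j => (hident' i hi j).aemeasurable_fst) n).div_const
      _).aestronglyMeasurable
  simpa [integral_div] using tendsto_integral_of_tendsto_ae_of_unifIntegrable hmeas
    (integrable_const _) (unifIntegrable_depart_div hpos' hint hident') hae

/-- **Existence of the mean cycle time.** If the interarrival and service times
`τ i n`, `i = 0, …, M`, `n = 1, 2, …`, form mutually independent sequences of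
i.i.d. nonnegative random variables with finite means, then there is a
constant `γ` such that `D_M(n)/n → γ` with probability one and
`E[D_M(n)]/n → γ`. -/
theorem exists_mean_cycle_time
    {Ω : Type*} [MeasurableSpace Ω] (μ : Measure Ω) [IsProbabilityMeasure μ]
    (M : ℕ) (τ : ℕ → ℕ → Ω → ℝ)
    (hpos : ∀ i ≤ M, ∀ n, 1 ≤ n → ∀ ω, 0 ≤ τ i n ω)
    (hmeas : ∀ i ≤ M, ∀ n, Measurable (τ i n))
    (hindep : iIndepFun
        (fun p : Fin (M + 1) × ℕ => τ (p.1 : ℕ) (p.2 + 1)) μ)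
    (hident : ∀ i ≤ M, ∀ n, 1 ≤ n → IdentDistrib (τ i n) (τ i 1) μ μ)
    (hint : ∀ i ≤ M, Integrable (τ i 1) μ) :
    ∃ γ : ℝ,
      (∀ᵐ ω ∂μ, Tendsto (fun n : ℕ => depart (fun i j => τ i j ω) M n / n)
          atTop (nhds γ))
        ∧ Tendsto (fun n : ℕ => (∫ ω, depart (fun i j => τ i j ω) M n ∂μ) / n)
            atTop (nhds γ) :=
  exists_mean_cycle_time_general μ M τ hpos hindep hident hint
end

section
/- For the stochastic tandem queueing system with infinite buffers, suppose the sequences {τ_{i,n} : n = 1, 2, …}, i = 0, 1, …, M, are mutually independent sequences of independent and identically distributed nonnegative random variables with 0 ≤ E[τ_{i,1}] < ∞ and Var[τ_{i,1}] < ∞. Then with probability one, lim_{n→∞} D_M(n)/n = max_{0 ≤ i ≤ M} E[τ_{i,1}]. -/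
open MeasureTheory ProbabilityTheory Finset Filter

/-! Write `S_i(n)` for the partial sums of row `i`. The recursion makes `D_{m+1}(n) - S_{m+1}(n)`
the running maximum of `0` and of `D_m(k) - S_{m+1}(k-1)`, `1 ≤ k ≤ n`, and a running maximum of
a sequence growing like `L n` grows like `max L 0 · n`. Hence if `D_m(n)/n → a` and
`S_{m+1}(n)/n → b`, then `D_{m+1}(n)/n → b + max (a - b) 0 = max a b`; induction on `m` reduces
the theorem to the strong law of large numbers for each row. -/

open Topology

def rowSum (τ : ℕ → ℕ → ℝ) (i n : ℕ) : ℝ := ∑ k ∈ range n, τ i (k + 1)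

theorem rowSum_succ (τ : ℕ → ℕ → ℝ) (i n : ℕ) :
    rowSum τ i (n + 1) = rowSum τ i n + τ i (n + 1) :=
  sum_range_succ _ _

theorem depart_zero_left (τ : ℕ → ℕ → ℝ) (n : ℕ) : depart τ 0 n = rowSum τ 0 n := by
  induction n with
  | zero => simp [depart, rowSum]
  | succ n ih => rw [depart, ih, rowSum_succ]

theorem depart_succ_succ (τ : ℕ → ℕ → ℝ) (m n : ℕ) :
    depart τ (m + 1) (n + 1) =
      max (depart τ m (n + 1)) (depart τ (m + 1) n) + τ (m + 1) (n + 1) := by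
  rw [depart]

theorem depart_succ_sub_rowSum (τ : ℕ → ℕ → ℝ) (m n : ℕ) :
    depart τ (m + 1) (n + 1) - rowSum τ (m + 1) (n + 1) =
      max (depart τ m (n + 1) - rowSum τ (m + 1) n)
        (depart τ (m + 1) n - rowSum τ (m + 1) n) := by
  rw [depart_succ_succ, rowSum_succ, max_sub_sub_right]
  ring

theorem Filter.Tendsto.div_natCast_add_one {f : ℕ → ℝ} {a : ℝ}
    (h : Tendsto (fun n => f n / n) atTop (𝓝 a)) :
    Tendsto (fun n => f n / (n + 1)) atTop (𝓝 a) := by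
  have := h.mul (tendsto_natCast_div_add_atTop (1 : ℝ))
  rw [mul_one] at this
  refine this.congr' ?_
  filter_upwards [eventually_ne_atTop 0] with n hn
  field_simp

theorem tendsto_div_of_running_max {x v : ℕ → ℝ} {L : ℝ}
    (hv : ∀ n, v (n + 1) = max (x (n + 1)) (v n))
    (hx : Tendsto (fun n => x n / n) atTop (𝓝 L)) :
    Tendsto (fun n => v n / n) atTop (𝓝 (max L 0)) := by
  have hv0 : ∀ n, v 0 ≤ v n := by
    intro n
    induction n with
    | zero => rfl
    | succ n ih => rw [hv]; exact ih.trans (le_max_right _ _)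
  have hlower : Tendsto (fun n => max (x n) (v 0) / n) atTop (𝓝 (max L 0)) :=
    (hx.max (tendsto_const_div_atTop_nhds_zero_nat (v 0))).congr fun n =>
      max_div_div_right n.cast_nonneg _ _
  refine tendsto_order.2 ⟨fun c hc => ?_, fun c hc => ?_⟩
  · filter_upwards [hlower.eventually (lt_mem_nhds hc), eventually_ne_atTop 0] with n hn hn0
    refine hn.trans_le (div_le_div_of_nonneg_right (max_le ?_ (hv0 n)) n.cast_nonneg)
    obtain ⟨k, rfl⟩ := Nat.exists_eq_succ_of_ne_zero hn0
    exact hv k ▸ le_max_left _ _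
  · obtain ⟨c₀, hc₀, hc₀c⟩ := exists_between hc
    have hc₀0 : 0 ≤ c₀ := (le_max_right L 0).trans hc₀.le
    obtain ⟨N, hN⟩ := eventually_atTop.1
      (hx.eventually (gt_mem_nhds ((le_max_left L 0).trans_lt hc₀)))
    have hbound : ∀ n ≥ N, v n ≤ max (v N) (c₀ * n) := by
      intro n hn
      induction n, hn using Nat.le_induction with
      | base => exact le_max_left _ _
      | succ n hn ih =>
        have hxn : x (n + 1) ≤ c₀ * (n + 1 : ℕ) :=
          ((div_lt_iff₀ (by positivity)).1 (hN (n + 1) (by omega))).le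
        rw [hv]
        refine max_le (hxn.trans (le_max_right _ _)) (ih.trans (max_le_max le_rfl ?_))
        gcongr
        omega
    have hupper : Tendsto (fun n : ℕ => max (v N / n) c₀) atTop (𝓝 c₀) := by
      simpa [max_eq_right hc₀0] using
        (tendsto_const_div_atTop_nhds_zero_nat (v N)).max (tendsto_const_nhds (x := c₀))
    filter_upwards [hupper.eventually (gt_mem_nhds hc₀c), eventually_ge_atTop N,
      eventually_ne_atTop 0] with n hn hnN hn0
    calc v n / n ≤ max (v N) (c₀ * n) / n := by gcongr; exact hbound n hnN
      _ = max (v N / n) c₀ := by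
        rw [← max_div_div_right n.cast_nonneg, mul_div_cancel_right₀ _ (by positivity)]
      _ < c := hn

theorem tendsto_depart_succ_div {τ : ℕ → ℕ → ℝ} {m : ℕ} {a b : ℝ}
    (hD : Tendsto (fun n => depart τ m n / n) atTop (𝓝 a))
    (hS : Tendsto (fun n => rowSum τ (m + 1) n / n) atTop (𝓝 b)) :
    Tendsto (fun n => depart τ (m + 1) n / n) atTop (𝓝 (max a b)) := by
  -- `k - 1` truncates at `k = 0`; harmless, as `tendsto_div_of_running_max` ignores `x 0`.
  have hS' : Tendsto (fun k => rowSum τ (m + 1) (k - 1) / k) atTop (𝓝 b) :=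
    (tendsto_add_atTop_iff_nat 1).1 (by simpa using hS.div_natCast_add_one)
  have hx : Tendsto (fun k => (depart τ m k - rowSum τ (m + 1) (k - 1)) / k) atTop
      (𝓝 (a - b)) := by
    simpa only [sub_div] using hD.sub hS'
  have hv := tendsto_div_of_running_max
    (v := fun n => depart τ (m + 1) n - rowSum τ (m + 1) n)
    (fun n => by simpa using depart_succ_sub_rowSum τ m n) hx
  have hlim : max a b = max (a - b) 0 + b := by
    rw [← max_add_add_right, sub_add_cancel, zero_add]
  rw [hlim]
  refine (hv.add hS).congr fun n => ?_
  rw [← add_div, sub_add_cancel]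

theorem tendsto_depart_div (τ : ℕ → ℕ → ℝ) (a : ℕ → ℝ) (M : ℕ)
    (h : ∀ i ≤ M, Tendsto (fun n => rowSum τ i n / n) atTop (𝓝 (a i))) :
    Tendsto (fun n => depart τ M n / n) atTop
      (𝓝 ((range (M + 1)).sup' nonempty_range_add_one a)) := by
  induction M with
  | zero => simpa [depart_zero_left] using h 0 le_rfl
  | succ M ih =>
    have hsup : (range (M + 2)).sup' nonempty_range_add_one a =
        max ((range (M + 1)).sup' nonempty_range_add_one a) (a (M + 1)) := by
      simp [range_add_one, sup'_insert, max_comm]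
    rw [hsup]
    exact tendsto_depart_succ_div (ih fun i hi => h i (by omega)) (h (M + 1) le_rfl)

theorem mean_cycle_time_eq_max_general
    {Ω : Type*} [MeasurableSpace Ω] (μ : Measure Ω)
    (M : ℕ) (τ : ℕ → ℕ → Ω → ℝ)
    (hindep : iIndepFun
        (fun p : Fin (M + 1) × ℕ => τ (p.1 : ℕ) (p.2 + 1)) μ)
    (hident : ∀ i ≤ M, ∀ n, 1 ≤ n → IdentDistrib (τ i n) (τ i 1) μ μ)
    (hint : ∀ i ≤ M, Integrable (τ i 1) μ) :
    ∀ᵐ ω ∂μ, Tendsto (fun n : ℕ => depart (fun i j => τ i j ω) M n / n) atTop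
      (nhds ((Finset.range (M + 1)).sup'
        (Finset.nonempty_range_iff.mpr (Nat.succ_ne_zero M))
        fun i => ∫ ω, τ i 1 ω ∂μ)) := by
  have hrow : ∀ i ≤ M, ∀ᵐ ω ∂μ,
      Tendsto (fun n => rowSum (fun i j => τ i j ω) i n / n) atTop (𝓝 (∫ ω, τ i 1 ω ∂μ)) :=
    fun i hi => strong_law_ae_real (fun n => τ i (n + 1)) (hint i hi)
      (fun n k hnk => hindep.indepFun (i := (⟨i, by omega⟩, n)) (j := (⟨i, by omega⟩, k))
        (by simpa using hnk))
      (fun n => hident i hi (n + 1) (by omega))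
  filter_upwards [ae_all_iff.2 fun i => eventually_imp_distrib_left.2 (hrow i)] with ω hω
  exact tendsto_depart_div _ _ M hω

/-- **Exact mean cycle time.** If the interarrival and service times `τ i n`,
`i = 0, …, M`, `n = 1, 2, …`, form mutually independent sequences of i.i.d.
nonnegative random variables with finite means and finite variances, then
with probability one `D_M(n)/n → max_{0 ≤ i ≤ M} E[τ i 1]`. -/
theorem mean_cycle_time_eq_max
    {Ω : Type*} [MeasurableSpace Ω] (μ : Measure Ω) [IsProbabilityMeasure μ]
    (M : ℕ) (τ : ℕ → ℕ → Ω → ℝ)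
    (hpos : ∀ i ≤ M, ∀ n, 1 ≤ n → ∀ ω, 0 ≤ τ i n ω)
    (hmeas : ∀ i ≤ M, ∀ n, Measurable (τ i n))
    (hindep : iIndepFun
        (fun p : Fin (M + 1) × ℕ => τ (p.1 : ℕ) (p.2 + 1)) μ)
    (hident : ∀ i ≤ M, ∀ n, 1 ≤ n → IdentDistrib (τ i n) (τ i 1) μ μ)
    (hint : ∀ i ≤ M, Integrable (τ i 1) μ)
    (hvar : ∀ i ≤ M, MemLp (τ i 1) 2 μ) :
    ∀ᵐ ω ∂μ, Tendsto (fun n : ℕ => depart (fun i j => τ i j ω) M n / n) atTop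
      (nhds ((Finset.range (M + 1)).sup'
        (Finset.nonempty_range_iff.mpr (Nat.succ_ne_zero M))
        fun i => ∫ ω, τ i 1 ω ∂μ)) :=
  mean_cycle_time_eq_max_general μ M τ hindep hident hint
end

section
/- For the two-queue tandem system with manufacturing blocking and intermediate buffer of capacity 0, it holds for every n ≥ 1 that D_2(n) = D_1(n) + τ_{2,n}, and D_1(n) admits the explicit representation D_1(n) = max_{1 ≤ k ≤ n} { Σ_{j=1}^{k} τ_{0,j} + τ_{1,k} + Σ_{j=k}^{n−1} max(τ_{1,j+1}, τ_{2,j}) }. -/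
open Finset

/-- Arrival epochs: `arr τ n = arr τ (n-1) + τ 0 n`, `arr τ 0 = 0`. -/
noncomputable def arr (τ : ℕ → ℕ → ℝ) : ℕ → ℝ
  | 0 => 0
  | n + 1 => arr τ n + τ 0 (n + 1)

/-- Departure epochs `(D_1(n), D_2(n))` of the two-queue tandem system with
manufacturing blocking and intermediate buffer of capacity 0:
`D_1(n) = max (max (D_0(n)) (D_1(n-1)) + τ 1 n) (D_2(n-1))` and
`D_2(n) = max (D_1(n)) (D_2(n-1)) + τ 2 n`, with `D_1(0) = D_2(0) = 0`. -/
noncomputable def mb (τ : ℕ → ℕ → ℝ) : ℕ → ℝ × ℝ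
  | 0 => (0, 0)
  | n + 1 =>
      let p := mb τ n
      let d1 := max (max (arr τ (n + 1)) p.1 + τ 1 (n + 1)) p.2
      (d1, max d1 p.2 + τ 2 (n + 1))

lemma arr_eq_sum (τ : ℕ → ℕ → ℝ) : ∀ k, arr τ k = ∑ j ∈ Finset.Icc 1 k, τ 0 j := by
  intro k
  induction k with
  | zero => simp [arr]
  | succ m ih =>
      rw [Finset.sum_Icc_succ_top (Nat.le_add_left 1 m)]
      simp [arr, ih]

lemma mb_snd (τ : ℕ → ℕ → ℝ) (m : ℕ) :
    (mb τ (m + 1)).2 = (mb τ (m + 1)).1 + τ 2 (m + 1) := by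
  show max (max (arr τ (m+1)) (mb τ m).1 + τ 1 (m+1)) (mb τ m).2 ⊔ (mb τ m).2 + τ 2 (m+1) = _
  rw [max_eq_left (le_max_right _ _)]
  rfl

/-- For the two-queue tandem system with manufacturing blocking and
intermediate buffer of capacity 0, for every `n ≥ 1`:
`D_2(n) = D_1(n) + τ 2 n` and
`D_1(n) = max_{1 ≤ k ≤ n} { ∑_{j=1}^{k} τ 0 j + τ 1 k
  + ∑_{j=k}^{n-1} max (τ 1 (j+1)) (τ 2 j) }`. -/
theorem mb_explicit (τ : ℕ → ℕ → ℝ) (hτ : ∀ i n, 0 ≤ τ i n)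
    (n : ℕ) (hn : 1 ≤ n) :
    (mb τ n).2 = (mb τ n).1 + τ 2 n
      ∧ (mb τ n).1 =
          (Finset.Icc 1 n).sup' (Finset.nonempty_Icc.mpr hn)
            (fun k => (∑ j ∈ Finset.Icc 1 k, τ 0 j) + τ 1 k
              + ∑ j ∈ Finset.Icc k (n - 1), max (τ 1 (j + 1)) (τ 2 j)) := by
  induction n, hn using Nat.le_induction with
  | base =>
      refine ⟨mb_snd τ 0, ?_⟩
      have h1 : (mb τ 1).1 = τ 0 1 + τ 1 1 := by
        show max (max (arr τ 1) (0:ℝ) + τ 1 1) 0 = _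
        have ha : arr τ 1 = τ 0 1 := by simp [arr]
        rw [ha, max_eq_left (hτ 0 1),
          max_eq_left (add_nonneg (hτ 0 1) (hτ 1 1))]
      rw [h1]
      simp
  | succ m hm ih =>
      refine ⟨mb_snd τ m, ?_⟩
      -- recurrence for D1
      have hrec : (mb τ (m + 1)).1
          = max (arr τ (m + 1) + τ 1 (m + 1))
              ((mb τ m).1 + max (τ 1 (m + 1)) (τ 2 m)) := by
        show max (max (arr τ (m+1)) (mb τ m).1 + τ 1 (m+1)) (mb τ m).2 = _
        have h2 : (mb τ m).2 = (mb τ m).1 + τ 2 m := by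
          obtain ⟨m', rfl⟩ := Nat.exists_eq_add_of_le' hm
          simpa using mb_snd τ m'
        rw [h2, ← max_add_add_right, max_assoc, max_add_add_left]
      have hins : Finset.Icc 1 (m + 1) = insert (m + 1) (Finset.Icc 1 m) :=
        (Finset.insert_Icc_right_eq_Icc_add_one (by omega)).symm
      have hne : (Finset.Icc 1 m).Nonempty := Finset.nonempty_Icc.mpr hm
      set c := max (τ 1 (m + 1)) (τ 2 m) with hc
      have hshift : ∀ k ∈ Finset.Icc 1 m,
          (∑ j ∈ Finset.Icc 1 k, τ 0 j) + τ 1 k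
              + ∑ j ∈ Finset.Icc k (m + 1 - 1), max (τ 1 (j + 1)) (τ 2 j)
            = ((∑ j ∈ Finset.Icc 1 k, τ 0 j) + τ 1 k
              + ∑ j ∈ Finset.Icc k (m - 1), max (τ 1 (j + 1)) (τ 2 j)) + c := by
        intro k hk
        simp only [Finset.mem_Icc] at hk
        have hm1 : m = (m - 1) + 1 := by omega
        rw [Nat.add_sub_cancel, hm1, Finset.sum_Icc_succ_top (by omega)]
        rw [← hm1]
        ring_nf
        rw [hc]
        ring
      have hsup : (Finset.Icc 1 m).sup' hne
            (fun k => (∑ j ∈ Finset.Icc 1 k, τ 0 j) + τ 1 k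
              + ∑ j ∈ Finset.Icc k (m + 1 - 1), max (τ 1 (j + 1)) (τ 2 j))
          = (Finset.Icc 1 m).sup' hne
            (fun k => (∑ j ∈ Finset.Icc 1 k, τ 0 j) + τ 1 k
              + ∑ j ∈ Finset.Icc k (m - 1), max (τ 1 (j + 1)) (τ 2 j)) + c := by
        rw [Finset.sup'_congr hne rfl hshift]
        exact (Finset.comp_sup'_eq_sup'_comp hne (fun x => x + c)
          (fun x y => (max_add_add_right x y c).symm)).symm
      rw [hrec, ih.2]
      have hsplit : (Finset.Icc 1 (m + 1)).sup' (Finset.nonempty_Icc.mpr (by omega))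
            (fun k => (∑ j ∈ Finset.Icc 1 k, τ 0 j) + τ 1 k
              + ∑ j ∈ Finset.Icc k (m + 1 - 1), max (τ 1 (j + 1)) (τ 2 j))
          = (insert (m + 1) (Finset.Icc 1 m)).sup' (hins ▸ Finset.nonempty_Icc.mpr (by omega))
            (fun k => (∑ j ∈ Finset.Icc 1 k, τ 0 j) + τ 1 k
              + ∑ j ∈ Finset.Icc k (m + 1 - 1), max (τ 1 (j + 1)) (τ 2 j)) :=
        Finset.sup'_congr _ hins (fun _ _ => rfl)
      rw [hsplit, Finset.sup'_insert]
      congr 1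
      · rw [arr_eq_sum]
        have : Finset.Icc (m + 1) (m + 1 - 1) = ∅ := by
          apply Finset.Icc_eq_empty; omega
        rw [this]
        simp
      · exact hsup.symm
end

section
/- For the stochastic two-queue tandem system with manufacturing blocking and intermediate buffer of capacity 0, suppose the sequences {τ_{i,n} : n = 1, 2, …}, i = 0, 1, 2, are mutually independent sequences of independent and identically distributed nonnegative random variables with finite means and finite variances. Then with probability one, lim_{n→∞} D_2(n)/n = max( E[τ_{0,1}], E[max(τ_{1,1}, τ_{2,1})] ). -/
/-!
Put `σ j = max (τ 1 (j + 2)) (τ 2 (j + 1))`: after job `j + 1` has moved to server 2, job `j + 2`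
leaves server 1 only once its own service and that of job `j + 1` at server 2 are both over.
Unrolling the recursion gives the max-plus formula
`D₁(n + 1) = ∑_{j<n} σ j + max_{k ≤ n} (D₀(k + 1) + τ 1 (k + 1) - ∑_{j<k} σ j)`,
and `D₂(n) = D₁(n) + τ 2 n`. The strong law applies to each `τ i` and to the `σ j`, which are
pairwise independent and identically distributed. Since the running maximum of a sequence
growing like `c k` grows like `max c 0 * n`, `D₂(n) / n` tends to
`E σ + max (E τ 0 - E σ) 0 = max (E τ 0) (E σ)`.
-/

open MeasureTheory ProbabilityTheory Finset Filter

open Topology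

section StrongLaw

variable {Ω : Type*} [MeasurableSpace Ω] {μ : Measure Ω}

theorem strong_law_ae_of_identDistrib {W : ℕ → Ω → ℝ} {X : Ω → ℝ}
    (hindep : Pairwise fun i j => W i ⟂ᵢ[μ] W j) (hident : ∀ j, IdentDistrib (W j) X μ μ)
    (hint : Integrable X μ) :
    ∀ᵐ ω ∂μ, Tendsto (fun n : ℕ => (∑ j ∈ range n, W j ω) / n) atTop (𝓝 (∫ ω, X ω ∂μ)) := by
  have h := strong_law_ae_real W ((hident 0).integrable_iff.2 hint) hindep
    fun j => (hident j).trans (hident 0).symm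
  rwa [(hident 0).integral_eq] at h

theorem strong_law_ae_of_iIndepFun {ι : Type*} {Y : ι → Ω → ℝ} (hY : iIndepFun Y μ)
    {a : ℕ → ι} (ha : Function.Injective a) {X : Ω → ℝ}
    (hident : ∀ j, IdentDistrib (Y (a j)) X μ μ) (hint : Integrable X μ) :
    ∀ᵐ ω ∂μ, Tendsto (fun n : ℕ => (∑ j ∈ range n, Y (a j) ω) / n) atTop
      (𝓝 (∫ ω, X ω ∂μ)) :=
  strong_law_ae_of_identDistrib (fun _ _ hij => hY.indepFun (ha.ne hij)) hident hint

theorem strong_law_ae_pair_of_iIndepFun [IsFiniteMeasure μ] {ι β : Type*}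
    [MeasurableSpace β] {Y : ι → Ω → β} (hY : iIndepFun Y μ) (hmeas : ∀ i, AEMeasurable (Y i) μ)
    {a b : ℕ → ι} (ha : Function.Injective a) (hb : Function.Injective b)
    (hab : ∀ i j, a i ≠ b j) {X Z : Ω → β} (hX : ∀ j, IdentDistrib (Y (a j)) X μ μ)
    (hZ : ∀ j, IdentDistrib (Y (b j)) Z μ μ) (hXZ : X ⟂ᵢ[μ] Z) {F : β × β → ℝ}
    (hF : Measurable F) (hint : Integrable (fun ω => F (X ω, Z ω)) μ) :
    ∀ᵐ ω ∂μ, Tendsto (fun n : ℕ => (∑ j ∈ range n, F (Y (a j) ω, Y (b j) ω)) / n) atTop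
      (𝓝 (∫ ω, F (X ω, Z ω) ∂μ)) :=
  strong_law_ae_of_identDistrib
    (fun i j hij => (hY.indepFun_prodMk_prodMk₀ hmeas (a i) (b i) (a j) (b j) (ha.ne hij)
      (hab i j) (hab j i).symm (hb.ne hij)).comp hF hF)
    (fun j => ((hX j).prodMk (hZ j) (hY.indepFun (hab j j)) hXZ).comp hF) hint

end StrongLaw

section Averages

theorem tendsto_succ_div_natCast_iff {u : ℕ → ℝ} {c : ℝ} :
    Tendsto (fun n : ℕ => u (n + 1) / n) atTop (𝓝 c) ↔
      Tendsto (fun n : ℕ => u n / n) atTop (𝓝 c) := by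
  have hratio := tendsto_natCast_div_add_atTop (1 : ℝ)
  rw [← tendsto_add_atTop_iff_nat 1 (f := fun n : ℕ => u n / n)]
  constructor
  · intro h
    refine (mul_one c ▸ h.mul hratio).congr' ?_
    filter_upwards [eventually_ne_atTop 0] with n hn
    push_cast
    field_simp
  · intro h
    refine (div_one c ▸ h.div hratio one_ne_zero).congr' ?_
    filter_upwards [eventually_ne_atTop 0] with n hn
    simp only [Pi.div_apply]
    push_cast
    field_simp

theorem tendsto_div_natCast_zero_of_tendsto_sum {y : ℕ → ℝ} {c : ℝ}
    (h : Tendsto (fun n : ℕ => (∑ k ∈ range n, y (k + 1)) / n) atTop (𝓝 c)) :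
    Tendsto (fun n : ℕ => y n / n) atTop (𝓝 0) := by
  rw [← tendsto_succ_div_natCast_iff]
  refine (sub_self c ▸ (tendsto_succ_div_natCast_iff.2 h).sub h).congr fun n => ?_
  rw [sum_range_succ, ← sub_div, add_sub_cancel_left]

theorem tendsto_partialSups_div_natCast {f : ℕ → ℝ} {c : ℝ}
    (hf : Tendsto (fun n : ℕ => f n / n) atTop (𝓝 c)) :
    Tendsto (fun n : ℕ => partialSups f n / n) atTop (𝓝 (max c 0)) := by
  rw [tendsto_order]
  constructor
  · intro d hd
    have hlow := hf.max (tendsto_const_div_atTop_nhds_zero_nat (f 0))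
    filter_upwards [(tendsto_order.1 hlow).1 d hd] with n hn
    refine hn.trans_le ?_
    rw [max_div_div_right n.cast_nonneg]
    exact div_le_div_of_nonneg_right
      (max_le (le_partialSups f n) (le_partialSups_of_le f n.zero_le)) n.cast_nonneg
  · intro d hd
    obtain ⟨e, hce, he, hed⟩ : ∃ e, c < e ∧ 0 < e ∧ e < d :=
      ⟨(max c 0 + d) / 2, by linarith [le_max_left c 0], by linarith [le_max_right c 0],
        by linarith⟩
    obtain ⟨N, hN⟩ := eventually_atTop.1 ((tendsto_order.1 hf).2 e hce)
    filter_upwards [eventually_gt_atTop N,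
      (tendsto_order.1 (tendsto_const_div_atTop_nhds_zero_nat (partialSups f N))).2 d
        (he.trans hed)] with n hNn hPn
    have hn : (0 : ℝ) < n := by exact_mod_cast N.zero_le.trans_lt hNn
    have hbound : partialSups f n ≤ max (partialSups f N) (e * n) := by
      refine partialSups_le f n _ fun k hk => ?_
      rcases le_or_gt k N with hkN | hkN
      · exact (le_partialSups_of_le f hkN).trans (le_max_left _ _)
      · have hk0 : (0 : ℝ) < k := by exact_mod_cast N.zero_le.trans_lt hkN
        have hfk := (div_lt_iff₀ hk0).1 (hN k hkN.le)
        have : e * k ≤ e * n := by gcongr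
        exact (hfk.le.trans this).trans (le_max_right _ _)
    calc partialSups f n / n ≤ max (partialSups f N) (e * n) / n :=
          div_le_div_of_nonneg_right hbound hn.le
      _ = max (partialSups f N / n) e := by
          rw [← max_div_div_right hn.le, mul_div_cancel_right₀ e hn.ne']
      _ < d := max_lt hPn hed

end Averages

section Tandem

variable (t : ℕ → ℕ → ℝ)

noncomputable def cycleSum (n : ℕ) : ℝ :=
  ∑ j ∈ range n, max (t 1 (j + 2)) (t 2 (j + 1))

theorem arr_eq_sum_s17 (n : ℕ) : arr t n = ∑ k ∈ range n, t 0 (k + 1) := by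
  induction n with
  | zero => rfl
  | succ n ih => rw [arr, ih, sum_range_succ]

theorem mb_snd_succ (n : ℕ) : (mb t (n + 1)).2 = (mb t (n + 1)).1 + t 2 (n + 1) := by
  show max (mb t (n + 1)).1 (mb t n).2 + _ = _
  rw [max_eq_left (show (mb t n).2 ≤ (mb t (n + 1)).1 from le_max_right _ _)]

theorem mb_fst_add_two (n : ℕ) :
    (mb t (n + 2)).1 = max (arr t (n + 2) + t 1 (n + 2))
      ((mb t (n + 1)).1 + max (t 1 (n + 2)) (t 2 (n + 1))) := by
  show max (max (arr t (n + 2)) (mb t (n + 1)).1 + t 1 (n + 2)) (mb t (n + 1)).2 = _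
  rw [mb_snd_succ, ← max_add_add_right, max_assoc, max_add_add_left]

theorem mb_fst_succ_eq_cycleSum_add_partialSups (h0 : 0 ≤ t 0 1) (h1 : 0 ≤ t 1 1) (n : ℕ) :
    (mb t (n + 1)).1 = cycleSum t n +
      partialSups (fun k => arr t (k + 1) + t 1 (k + 1) - cycleSum t k) n := by
  induction n with
  | zero => simp [mb, arr, cycleSum, h0, add_nonneg h0 h1]
  | succ n ih =>
    have hsup := partialSups_succ (fun k => arr t (k + 1) + t 1 (k + 1) - cycleSum t k) n
    rw [Order.succ_eq_add_one] at hsup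
    have hcycle : cycleSum t (n + 1) = cycleSum t n + max (t 1 (n + 2)) (t 2 (n + 1)) :=
      sum_range_succ _ _
    rw [mb_fst_add_two, ih, hsup, ← max_add_add_left (cycleSum t (n + 1)), max_comm, hcycle]
    congr 1 <;> ring

theorem tendsto_mb_snd_div_natCast {a b : ℝ} (h0 : 0 ≤ t 0 1) (h1 : 0 ≤ t 1 1)
    (harr : Tendsto (fun n : ℕ => arr t n / n) atTop (𝓝 a))
    (hcycle : Tendsto (fun n : ℕ => cycleSum t n / n) atTop (𝓝 b))
    (ht1 : Tendsto (fun n : ℕ => t 1 n / n) atTop (𝓝 0))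
    (ht2 : Tendsto (fun n : ℕ => t 2 n / n) atTop (𝓝 0)) :
    Tendsto (fun n : ℕ => (mb t n).2 / n) atTop (𝓝 (max a b)) := by
  rw [← tendsto_succ_div_natCast_iff]
  have hstart : Tendsto (fun k : ℕ => (arr t (k + 1) + t 1 (k + 1) - cycleSum t k) / k)
      atTop (𝓝 (a + 0 - b)) :=
    (((tendsto_succ_div_natCast_iff.2 harr).add (tendsto_succ_div_natCast_iff.2 ht1)).sub
      hcycle).congr fun k => by rw [sub_div, add_div]
  have hlim := (hcycle.add (tendsto_partialSups_div_natCast hstart)).add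
    (tendsto_succ_div_natCast_iff.2 ht2)
  have hmax : b + max (a + 0 - b) 0 + 0 = max a b := by
    rw [add_zero, add_zero, ← max_add_add_left, add_sub_cancel, add_zero, max_comm]
  refine (hmax ▸ hlim).congr fun n => ?_
  rw [mb_snd_succ, mb_fst_succ_eq_cycleSum_add_partialSups t h0 h1, add_div, add_div]

end Tandem

theorem mean_cycle_time_manufacturing_blocking_general
    {Ω : Type*} [MeasurableSpace Ω] (μ : Measure Ω) [IsProbabilityMeasure μ]
    (τ : ℕ → ℕ → Ω → ℝ)
    (hpos : ∀ i ≤ 2, ∀ n, 1 ≤ n → ∀ ω, 0 ≤ τ i n ω)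
    (hindep : iIndepFun
        (fun p : Fin 3 × ℕ => τ (p.1 : ℕ) (p.2 + 1)) μ)
    (hident : ∀ i ≤ 2, ∀ n, 1 ≤ n → IdentDistrib (τ i n) (τ i 1) μ μ)
    (hint : ∀ i ≤ 2, Integrable (τ i 1) μ) :
    ∀ᵐ ω ∂μ, Tendsto (fun n : ℕ => (mb (fun i j => τ i j ω) n).2 / n) atTop
      (nhds (max (∫ ω, τ 0 1 ω ∂μ) (∫ ω, max (τ 1 1 ω) (τ 2 1 ω) ∂μ))) := by
  have hslln (i : Fin 3) := strong_law_ae_of_iIndepFun hindep (Prod.mk_right_injective i)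
    (fun k => hident i i.is_le (k + 1) k.succ_pos) (hint i i.is_le)
  have hcycle := strong_law_ae_pair_of_iIndepFun hindep
    (fun p => (hident p.1 p.1.is_le (p.2 + 1) p.2.succ_pos).aemeasurable_fst)
    (a := fun k => (1, k + 1)) (b := fun k => (2, k))
    (fun _ _ h => by simpa using h) (Prod.mk_right_injective 2) (fun _ _ => by simp)
    (fun k => hident 1 (by norm_num) (k + 2) (by omega))
    (fun k => hident 2 le_rfl (k + 1) k.succ_pos)
    (hindep.indepFun (i := (1, 0)) (j := (2, 0)) (by decide))
    (measurable_fst.max measurable_snd) ((hint 1 (by norm_num)).sup (hint 2 le_rfl))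
  filter_upwards [hslln 0, hslln 1, hslln 2, hcycle] with ω h0 h1 h2 hc
  exact tendsto_mb_snd_div_natCast _ (hpos 0 (by norm_num) 1 le_rfl ω)
    (hpos 1 (by norm_num) 1 le_rfl ω) (by simpa only [arr_eq_sum_s17, Fin.val_zero] using h0) hc
    (tendsto_div_natCast_zero_of_tendsto_sum h1) (tendsto_div_natCast_zero_of_tendsto_sum h2)

/-- **Mean cycle time under manufacturing blocking.** If the interarrival and
service times `τ i n`, `i = 0, 1, 2`, form mutually independent sequences of
i.i.d. nonnegative random variables with finite means and finite variances,
then with probability one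
`D_2(n)/n → max (E[τ 0 1]) (E[max (τ 1 1) (τ 2 1)])`. -/
theorem mean_cycle_time_manufacturing_blocking
    {Ω : Type*} [MeasurableSpace Ω] (μ : Measure Ω) [IsProbabilityMeasure μ]
    (τ : ℕ → ℕ → Ω → ℝ)
    (hpos : ∀ i ≤ 2, ∀ n, 1 ≤ n → ∀ ω, 0 ≤ τ i n ω)
    (hmeas : ∀ i ≤ 2, ∀ n, Measurable (τ i n))
    (hindep : iIndepFun
        (fun p : Fin 3 × ℕ => τ (p.1 : ℕ) (p.2 + 1)) μ)
    (hident : ∀ i ≤ 2, ∀ n, 1 ≤ n → IdentDistrib (τ i n) (τ i 1) μ μ)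
    (hint : ∀ i ≤ 2, Integrable (τ i 1) μ)
    (hvar : ∀ i ≤ 2, MemLp (τ i 1) 2 μ) :
    ∀ᵐ ω ∂μ, Tendsto (fun n : ℕ => (mb (fun i j => τ i j ω) n).2 / n) atTop
      (nhds (max (∫ ω, τ 0 1 ω ∂μ) (∫ ω, max (τ 1 1 ω) (τ 2 1 ω) ∂μ))) :=
  mean_cycle_time_manufacturing_blocking_general μ τ hpos hindep hident hint
end

section
/- For the stochastic two-queue tandem system with communication blocking and intermediate buffer of capacity 0, suppose the sequences {τ_{i,n} : n = 1, 2, …}, i = 0, 1, 2, are mutually independent sequences of independent and identically distributed nonnegative random variables with finite means and finite variances. Then with probability one, lim_{n→∞} D_2(n)/n = max( E[τ_{0,1}], E[τ_{1,1}] + E[τ_{2,1}] ). -/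
open MeasureTheory ProbabilityTheory Finset Filter

/-- Departure epochs `(D_1(n), D_2(n))` of the two-queue tandem system with
communication blocking and intermediate buffer of capacity 0. -/
noncomputable def cb (τ : ℕ → ℕ → ℝ) : ℕ → ℝ × ℝ
  | 0 => (0, 0)
  | n + 1 =>
      let p := cb τ n
      let d1 := max (max (arr τ (n + 1)) p.1) p.2 + τ 1 (n + 1)
      (d1, max d1 p.2 + τ 2 (n + 1))

/-!
With zero intermediate buffer, job `n + 1` cannot enter server 1 before job `n` has left
server 2, so `D₂(n+1) = max (A(n+1), D₂(n)) + τ₁(n+1) + τ₂(n+1)` with `A = D₀` the arrival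
epochs: the tandem behaves as a single queue with service times `τ₁ + τ₂`. Subtracting the
partial sums `V(n)` of these service times turns this Lindley recursion into a running maximum
of `A(n+1) - V(n)`, whose growth rate is `max (E τ₀ - E(τ₁ + τ₂)) 0` by the strong law of
large numbers; adding back `V(n)/n → E(τ₁ + τ₂)` gives the claim.
-/

lemma tendsto_div_natCast_succ {u : ℕ → ℝ} {c : ℝ}
    (h : Tendsto (fun n : ℕ => u n / n) atTop (nhds c)) :
    Tendsto (fun n : ℕ => u n / (n + 1)) atTop (nhds c) := by
  have h' := h.mul (tendsto_natCast_div_add_atTop (1 : ℝ))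
  rw [mul_one] at h'
  refine h'.congr' ?_
  filter_upwards [eventually_ne_atTop 0] with n hn
  field_simp

lemma tendsto_runningMax_div {X M : ℕ → ℝ} {c : ℝ}
    (hX : Tendsto (fun n : ℕ => X n / (n + 1)) atTop (nhds c))
    (hM0 : M 0 = 0) (hM : ∀ n, M (n + 1) = max (M n) (X n)) :
    Tendsto (fun n : ℕ => M n / n) atTop (nhds (max c 0)) := by
  have hmono : Monotone M := monotone_nat_of_le_succ fun n => (hM n).symm ▸ le_max_left _ _
  have hnonneg : ∀ n, 0 ≤ M n := fun n => hM0 ▸ hmono n.zero_le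
  rw [← tendsto_add_atTop_iff_nat 1]
  refine tendsto_order.2 ⟨fun a ha => ?_, fun b hb => ?_⟩
  · filter_upwards [(hX.max tendsto_const_nhds).eventually (lt_mem_nhds ha)] with n hn
    refine hn.trans_le (max_le ?_ (div_nonneg (hnonneg _) (by positivity)))
    push_cast
    gcongr
    exact (hM n).symm ▸ le_max_right _ _
  · obtain ⟨b', hcb', hb'b⟩ := exists_between hb
    have hb' : 0 ≤ b' := (le_max_right c 0).trans hcb'.le
    obtain ⟨N, hN⟩ := eventually_atTop.1
      (hX.eventually (gt_mem_nhds ((le_max_left c 0).trans_lt hcb')))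
    have hbound : ∀ n, N ≤ n → M n ≤ max (M N) (b' * n) := by
      intro n hn
      induction n, hn using Nat.le_induction with
      | base => exact le_max_left _ _
      | succ n hn ih =>
        have hXn : X n ≤ b' * (n + 1) := by
          have := hN n hn
          rw [div_lt_iff₀ (by positivity)] at this
          linarith
        rw [hM n]
        push_cast
        refine max_le (ih.trans (max_le_max le_rfl (by nlinarith))) (hXn.trans (le_max_right _ _))
    have hlim : Tendsto (fun n : ℕ => max (M N / ((n + 1 : ℕ) : ℝ)) b') atTop (nhds b') := by
      have h := ((tendsto_add_atTop_iff_nat 1).2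
        (tendsto_const_div_atTop_nhds_zero_nat (M N))).max (tendsto_const_nhds (x := b'))
      rwa [max_eq_right hb'] at h
    filter_upwards [hlim.eventually (gt_mem_nhds hb'b), eventually_ge_atTop N] with n hn hNn
    calc M (n + 1) / ((n + 1 : ℕ) : ℝ)
        ≤ max (M N) (b' * ((n + 1 : ℕ) : ℝ)) / ((n + 1 : ℕ) : ℝ) := by
          gcongr
          exact hbound (n + 1) (by omega)
      _ = max (M N / ((n + 1 : ℕ) : ℝ)) b' := by
          rw [← max_div_div_right (by positivity), mul_div_cancel_right₀ _ (by positivity)]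
      _ < b := hn

lemma tendsto_lindley_div {a s D : ℕ → ℝ} {α β : ℝ} (hD0 : D 0 = 0)
    (hD : ∀ n, D (n + 1) = max (a (n + 1)) (D n) + s (n + 1))
    (ha : Tendsto (fun n : ℕ => a n / n) atTop (nhds α))
    (hs : Tendsto (fun n : ℕ => (∑ k ∈ range n, s (k + 1)) / n) atTop (nhds β)) :
    Tendsto (fun n : ℕ => D n / n) atTop (nhds (max α β)) := by
  set V : ℕ → ℝ := fun n => ∑ k ∈ range n, s (k + 1)
  have hE : ∀ n, D (n + 1) - V (n + 1) = max (D n - V n) (a (n + 1) - V n) := by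
    intro n
    simp only [V, sum_range_succ, hD, max_sub_sub_right, max_comm (D n)]
    ring
  have hX : Tendsto (fun n : ℕ => (a (n + 1) - V n) / (n + 1)) atTop (nhds (α - β)) := by
    have ha' : Tendsto (fun n : ℕ => a (n + 1) / (n + 1)) atTop (nhds α) := by
      have h := (tendsto_add_atTop_iff_nat 1).2 ha
      push_cast at h
      exact h
    simpa only [sub_div] using ha'.sub (tendsto_div_natCast_succ hs)
  have hE' := tendsto_runningMax_div (M := fun n => D n - V n) hX (by simp [hD0, V]) hE
  have hmax : β + max (α - β) 0 = max α β := by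
    rw [add_max, add_zero, add_sub_cancel, max_comm]
  rw [← hmax]
  refine (hs.add hE').congr fun n => ?_
  rw [← add_div, add_sub_cancel]

lemma arr_eq_sum_range (τ : ℕ → ℕ → ℝ) (n : ℕ) :
    arr τ n = ∑ k ∈ range n, τ 0 (k + 1) := by
  induction n with
  | zero => rfl
  | succ n ih => rw [sum_range_succ, ← ih]; rfl

lemma cb_fst_le_snd (τ : ℕ → ℕ → ℝ) (h2 : ∀ n, 1 ≤ n → 0 ≤ τ 2 n) (n : ℕ) :
    (cb τ n).1 ≤ (cb τ n).2 := by
  cases n with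
  | zero => simp [cb]
  | succ n => simpa [cb] using le_add_of_le_of_nonneg (le_max_left _ _) (h2 (n + 1) n.succ_pos)

/-- Since `D₁(n) ≤ D₂(n) ≤ D₁(n+1)`, the blocking maxima collapse. -/
lemma cb_snd_succ (τ : ℕ → ℕ → ℝ) (h1 : ∀ n, 1 ≤ n → 0 ≤ τ 1 n)
    (h2 : ∀ n, 1 ≤ n → 0 ≤ τ 2 n) (n : ℕ) :
    (cb τ (n + 1)).2 = max (arr τ (n + 1)) (cb τ n).2 + (τ 1 (n + 1) + τ 2 (n + 1)) := by
  have hstart : max (max (arr τ (n + 1)) (cb τ n).1) (cb τ n).2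
      = max (arr τ (n + 1)) (cb τ n).2 := by
    rw [max_assoc, max_eq_right (cb_fst_le_snd τ h2 n)]
  have hfree : (cb τ n).2 ≤ max (arr τ (n + 1)) (cb τ n).2 + τ 1 (n + 1) :=
    le_add_of_le_of_nonneg (le_max_right _ _) (h1 (n + 1) n.succ_pos)
  simp only [cb, hstart, max_eq_left hfree]
  ring

lemma ae_tendsto_row_average {Ω ι : Type*} [MeasurableSpace Ω] {μ : Measure Ω}
    {X : ι × ℕ → Ω → ℝ} (hindep : iIndepFun X μ) (i : ι)
    (hident : ∀ n, IdentDistrib (X (i, n)) (X (i, 0)) μ μ) (hint : Integrable (X (i, 0)) μ) :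
    ∀ᵐ ω ∂μ, Tendsto (fun n : ℕ => (∑ k ∈ range n, X (i, k) ω) / n) atTop
      (nhds (∫ ω, X (i, 0) ω ∂μ)) :=
  strong_law_ae_real (fun n => X (i, n)) hint
    (fun _ _ hkl => hindep.indepFun (by simpa using hkl)) hident

theorem mean_cycle_time_communication_blocking_general
    {Ω : Type*} [MeasurableSpace Ω] (μ : Measure Ω)
    (τ : ℕ → ℕ → Ω → ℝ)
    (hpos : ∀ i ≤ 2, ∀ n, 1 ≤ n → ∀ ω, 0 ≤ τ i n ω)
    (hindep : iIndepFun
        (fun p : Fin 3 × ℕ => τ (p.1 : ℕ) (p.2 + 1)) μ)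
    (hident : ∀ i ≤ 2, ∀ n, 1 ≤ n → IdentDistrib (τ i n) (τ i 1) μ μ)
    (hint : ∀ i ≤ 2, Integrable (τ i 1) μ) :
    ∀ᵐ ω ∂μ, Tendsto (fun n : ℕ => (cb (fun i j => τ i j ω) n).2 / n) atTop
      (nhds (max (∫ ω, τ 0 1 ω ∂μ) ((∫ ω, τ 1 1 ω ∂μ) + ∫ ω, τ 2 1 ω ∂μ))) := by
  have row : ∀ i ≤ 2, ∀ᵐ ω ∂μ, Tendsto (fun n : ℕ => (∑ k ∈ range n, τ i (k + 1) ω) / n)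
      atTop (nhds (∫ ω, τ i 1 ω ∂μ)) := fun i hi =>
    ae_tendsto_row_average hindep (⟨i, by omega⟩ : Fin 3)
      (fun n => hident i hi (n + 1) n.succ_pos) (hint i hi)
  filter_upwards [row 0 (by norm_num), row 1 (by norm_num), row 2 le_rfl] with ω h0 h1 h2
  refine tendsto_lindley_div (a := arr fun i j => τ i j ω) (s := fun k => τ 1 k ω + τ 2 k ω) rfl
    (cb_snd_succ _ (fun n hn => hpos 1 (by norm_num) n hn ω) (fun n hn => hpos 2 le_rfl n hn ω))
    (h0.congr fun n => by rw [arr_eq_sum_range]) ?_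
  simpa only [sum_add_distrib, add_div] using h1.add h2

/-- **Mean cycle time under communication blocking.** If the interarrival and
service times `τ i n`, `i = 0, 1, 2`, form mutually independent sequences of
i.i.d. nonnegative random variables with finite means and finite variances,
then with probability one
`D_2(n)/n → max (E[τ 0 1]) (E[τ 1 1] + E[τ 2 1])`. -/
theorem mean_cycle_time_communication_blocking
    {Ω : Type*} [MeasurableSpace Ω] (μ : Measure Ω) [IsProbabilityMeasure μ]
    (τ : ℕ → ℕ → Ω → ℝ)
    (hpos : ∀ i ≤ 2, ∀ n, 1 ≤ n → ∀ ω, 0 ≤ τ i n ω)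
    (hmeas : ∀ i ≤ 2, ∀ n, Measurable (τ i n))
    (hindep : iIndepFun
        (fun p : Fin 3 × ℕ => τ (p.1 : ℕ) (p.2 + 1)) μ)
    (hident : ∀ i ≤ 2, ∀ n, 1 ≤ n → IdentDistrib (τ i n) (τ i 1) μ μ)
    (hint : ∀ i ≤ 2, Integrable (τ i 1) μ)
    (hvar : ∀ i ≤ 2, MemLp (τ i 1) 2 μ) :
    ∀ᵐ ω ∂μ, Tendsto (fun n : ℕ => (cb (fun i j => τ i j ω) n).2 / n) atTop
      (nhds (max (∫ ω, τ 0 1 ω ∂μ) ((∫ ω, τ 1 1 ω ∂μ) + ∫ ω, τ 2 1 ω ∂μ))) :=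
  mean_cycle_time_communication_blocking_general μ τ hpos hindep hident hint
end
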